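/- arXiv:2304.09045 — 6 statements merged into one kernel-verified Lean document; each statement's English description precedes it below -/
import Mathlib

section
/- Let G be a topological group and H a closed subgroup of finite index. Let (Bohr(G), β) be the Bohr compactification of G and let K be the closure of β(H) in Bohr(G). Then K is a finite-index subgroup of Bohr(G), the pair (K, β|_H) is a Bohr compactification of H, and K and Bohr(G) have the same identity component. -/
/-!
A closed subgroup `H` of finite index is open, so `G ⧸ H` is finite and discrete. Writing `K` for
the closure of `β(H)`, the image of `β(G)` in `Bohr(G) ⧸ K` is finite, hence closed, and dense, so
`K` has finite index; being closed, `K` is then open, hence contains the identity component.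

For the universal property, a continuous `α : H →* C` into a compact group induces the monomial
representation `G →* C ≀ Sym(G ⧸ H)`, `g ↦ (q ↦ α (r(g q)⁻¹ g r(q)), q ↦ g q)` for a section `r`
of `G → G ⧸ H` with `r(H) = 1`. It is continuous because `H` is open, so it extends to `Bohr(G)`.
On `K` the extension fixes the coset `H`, and its coefficient at `H` is a continuous homomorphism
`K →* C` extending `α`.
-/

/-- `(B, β)` is a Bohr compactification of the topological group `G`. -/
def IsBohrCompactification (G B : Type) [Group G] [TopologicalSpace G]
    [Group B] [TopologicalSpace B] (β : G →* B) : Prop :=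
  Continuous β ∧ DenseRange β ∧ CompactSpace B ∧ T2Space B ∧ IsTopologicalGroup B ∧
    ∀ (K : Type) [Group K] [TopologicalSpace K] [IsTopologicalGroup K] [CompactSpace K]
      [T2Space K] (α : G →* K), Continuous α →
      ∃ α' : B →* K, Continuous α' ∧ α'.comp β = α

-- The permutational wreath product `C ≀ Sym(ι)`.
@[ext] structure PermWreath (ι C : Type*) where
  coeff : ι → C
  perm : Equiv.Perm ι

namespace PermWreath

variable {ι C : Type*}

section Group

variable [Group C]

instance : Mul (PermWreath ι C) :=
  ⟨fun a b => ⟨fun i => a.coeff (b.perm i) * b.coeff i, a.perm * b.perm⟩⟩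
instance : One (PermWreath ι C) := ⟨⟨1, 1⟩⟩
instance : Inv (PermWreath ι C) := ⟨fun a => ⟨fun i => (a.coeff (a.perm⁻¹ i))⁻¹, a.perm⁻¹⟩⟩

@[simp] lemma mul_coeff (a b : PermWreath ι C) (i : ι) :
    (a * b).coeff i = a.coeff (b.perm i) * b.coeff i := rfl
@[simp] lemma mul_perm (a b : PermWreath ι C) : (a * b).perm = a.perm * b.perm := rfl
@[simp] lemma one_coeff (i : ι) : (1 : PermWreath ι C).coeff i = 1 := rfl
@[simp] lemma one_perm : (1 : PermWreath ι C).perm = 1 := rfl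
@[simp] lemma inv_coeff (a : PermWreath ι C) (i : ι) :
    a⁻¹.coeff i = (a.coeff (a.perm⁻¹ i))⁻¹ := rfl
@[simp] lemma inv_perm (a : PermWreath ι C) : a⁻¹.perm = a.perm⁻¹ := rfl

instance : Group (PermWreath ι C) where
  mul_assoc a b c := by ext <;> simp [mul_assoc]
  one_mul a := by ext <;> simp
  mul_one a := by ext <;> simp
  inv_mul_cancel a := by ext <;> simp

def stabilizer (i : ι) : Subgroup (PermWreath ι C) where
  carrier := {w | w.perm i = i}
  mul_mem' {a b} ha hb := by simp_all [Equiv.Perm.mul_apply]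
  one_mem' := rfl
  inv_mem' {a} ha := (Equiv.symm_apply_eq _).2 ha.symm

def coeffAt (i : ι) : stabilizer (C := C) i →* C where
  toFun w := w.1.coeff i
  map_one' := rfl
  map_mul' a b := by simp [show b.1.perm i = i from b.2]

end Group

section Topology

variable [TopologicalSpace C]

local instance : TopologicalSpace (Equiv.Perm ι) := ⊥
local instance : DiscreteTopology (Equiv.Perm ι) := ⟨rfl⟩

def equivProd : PermWreath ι C ≃ (ι → C) × Equiv.Perm ι where
  toFun w := (w.coeff, w.perm)
  invFun q := ⟨q.1, q.2⟩

instance : TopologicalSpace (PermWreath ι C) := .induced equivProd inferInstance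

def homeomorphProd : PermWreath ι C ≃ₜ (ι → C) × Equiv.Perm ι where
  toEquiv := equivProd
  continuous_toFun := continuous_induced_dom
  continuous_invFun := continuous_induced_rng.2 continuous_id

lemma continuous_coeff : Continuous (coeff : PermWreath ι C → ι → C) :=
  continuous_fst.comp homeomorphProd.continuous

lemma isLocallyConstant_perm : IsLocallyConstant (perm : PermWreath ι C → Equiv.Perm ι) :=
  (IsLocallyConstant.iff_continuous _).2 (continuous_snd.comp homeomorphProd.continuous)

lemma continuous_mk {X : Type*} [TopologicalSpace X] {f : X → ι → C} {p : X → Equiv.Perm ι}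
    (hf : Continuous f) (hp : IsLocallyConstant p) :
    Continuous fun x => (⟨f x, p x⟩ : PermWreath ι C) :=
  homeomorphProd.symm.continuous.comp (hf.prodMk hp.continuous)

lemma continuous_coeff_apply {X : Type*} [TopologicalSpace X] {f : X → PermWreath ι C}
    {p : X → Equiv.Perm ι} (hf : Continuous f) (hp : IsLocallyConstant p) (i : ι) :
    Continuous fun x => (f x).coeff (p x i) := by
  have : Continuous fun q : (ι → C) × Equiv.Perm ι => q.1 (q.2 i) :=
    continuous_prod_of_discrete_right.2 fun σ => continuous_apply (σ i)
  exact this.comp ((continuous_coeff.comp hf).prodMk hp.continuous)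

instance [CompactSpace C] [Finite ι] : CompactSpace (PermWreath ι C) :=
  homeomorphProd.symm.compactSpace

instance [T2Space C] : T2Space (PermWreath ι C) :=
  homeomorphProd.isEmbedding.t2Space

instance [Group C] [IsTopologicalGroup C] : IsTopologicalGroup (PermWreath ι C) where
  continuous_mul := continuous_mk
    (continuous_pi fun i => (continuous_coeff_apply continuous_fst
      (isLocallyConstant_perm.comp_continuous continuous_snd) i).mul
      ((continuous_apply i).comp (continuous_coeff.comp continuous_snd)))
    ((isLocallyConstant_perm.comp_continuous continuous_fst).mul
      (isLocallyConstant_perm.comp_continuous continuous_snd))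
  continuous_inv := continuous_mk
    (continuous_pi fun i =>
      (continuous_coeff_apply continuous_id isLocallyConstant_perm.inv i).inv)
    isLocallyConstant_perm.inv

lemma isClosed_stabilizer [Group C] (i : ι) :
    IsClosed (stabilizer (C := C) i : Set (PermWreath ι C)) :=
  (isLocallyConstant_perm.comp (· i)).isClosed_fiber i

lemma continuous_coeffAt [Group C] (i : ι) : Continuous (coeffAt (C := C) i) :=
  (continuous_apply i).comp (continuous_coeff.comp continuous_subtype_val)

end Topology

end PermWreath

section Induced

variable {G : Type*} [Group G] (H : Subgroup G)

open scoped Classical in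
noncomputable def cosetRep (q : G ⧸ H) : G :=
  if q = ((1 : G) : G ⧸ H) then 1 else q.out

@[simp] lemma mk_cosetRep (q : G ⧸ H) : ((cosetRep H q : G) : G ⧸ H) = q := by
  unfold cosetRep
  split_ifs with h <;> simp [h]

lemma cosetRep_one : cosetRep H ((1 : G) : G ⧸ H) = 1 := if_pos rfl

noncomputable def cosetCocycle (g : G) (q : G ⧸ H) : H :=
  ⟨(cosetRep H (g • q))⁻¹ * (g * cosetRep H q), by
    rw [← QuotientGroup.leftRel_apply, ← Quotient.eq'']
    exact (mk_cosetRep H _).trans (congrArg (g • ·) (mk_cosetRep H q)).symm⟩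

@[simp] lemma cosetCocycle_one (q : G ⧸ H) : cosetCocycle H 1 q = 1 := by
  ext
  simp [cosetCocycle]

lemma cosetCocycle_mul (g₁ g₂ : G) (q : G ⧸ H) :
    cosetCocycle H (g₁ * g₂) q = cosetCocycle H g₁ (g₂ • q) * cosetCocycle H g₂ q := by
  ext
  simp only [cosetCocycle, Subgroup.coe_mul, mul_smul]
  group

lemma cosetCocycle_of_mem (h : H) : cosetCocycle H h ((1 : G) : G ⧸ H) = h := by
  have hfix : (h : G) • ((1 : G) : G ⧸ H) = ((1 : G) : G ⧸ H) := by
    rw [← QuotientGroup.mk_mul_of_mem _ h.2]; simp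
  ext
  simp [cosetCocycle, hfix, cosetRep_one]

lemma continuous_cosetCocycle [TopologicalSpace G] [IsTopologicalGroup G]
    (hH : IsOpen (H : Set G)) (q : G ⧸ H) : Continuous fun g => cosetCocycle H g q := by
  have := QuotientGroup.discreteTopology hH
  have hrep : Continuous fun g : G => cosetRep H (g • q) :=
    (continuous_of_discreteTopology (f := cosetRep H)).comp (continuous_id.smul continuous_const)
  exact (hrep.inv.mul (continuous_id.mul continuous_const)).subtype_mk _

lemma isLocallyConstant_toPermHom [TopologicalSpace G] [IsTopologicalGroup G] [H.FiniteIndex]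
    (hH : IsOpen (H : Set G)) : IsLocallyConstant (MulAction.toPermHom G (G ⧸ H)) := by
  have := QuotientGroup.discreteTopology hH
  refine IsLocallyConstant.desc _ _ ?_ DFunLike.coe_injective
  exact (IsLocallyConstant.iff_continuous _).2
    (continuous_pi fun q => continuous_id.smul continuous_const)

variable {C : Type*} [Group C]

noncomputable def inducedWreath (α : H →* C) : G →* PermWreath (G ⧸ H) C where
  toFun g := ⟨fun q => α (cosetCocycle H g q), MulAction.toPermHom G (G ⧸ H) g⟩
  map_one' := by ext <;> simp
  map_mul' g₁ g₂ := by ext <;> simp [cosetCocycle_mul, mul_smul]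

lemma continuous_inducedWreath [TopologicalSpace G] [IsTopologicalGroup G] [TopologicalSpace C]
    [H.FiniteIndex] (hH : IsOpen (H : Set G)) {α : H →* C} (hα : Continuous α) :
    Continuous (inducedWreath H α) :=
  PermWreath.continuous_mk (continuous_pi fun q => hα.comp (continuous_cosetCocycle H hH q))
    (isLocallyConstant_toPermHom H hH)

lemma inducedWreath_mem_stabilizer (α : H →* C) (h : H) :
    inducedWreath H α h ∈ PermWreath.stabilizer ((1 : G) : G ⧸ H) := by
  show (h : G) • ((1 : G) : G ⧸ H) = _
  rw [← QuotientGroup.mk_mul_of_mem _ h.2]; simp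

lemma inducedWreath_coeff_one (α : H →* C) (h : H) :
    (inducedWreath H α h).coeff ((1 : G) : G ⧸ H) = α h :=
  congrArg α (cosetCocycle_of_mem H h)

end Induced

def MonoidHom.toTopologicalClosureMap {G B : Type*} [Group G] [Group B] [TopologicalSpace B]
    [IsTopologicalGroup B] (β : G →* B) (H : Subgroup G) : H →* (H.map β).topologicalClosure :=
  (β.comp H.subtype).codRestrict _ fun h => Subgroup.le_topologicalClosure _ ⟨h, h.2, rfl⟩

section Bohr

variable {G B : Type*} [Group G] [Group B] [TopologicalSpace B] [IsTopologicalGroup B]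

lemma Subgroup.finiteIndex_topologicalClosure_map {β : G →* B} (hβ : DenseRange β)
    (H : Subgroup G) [H.FiniteIndex] : (H.map β).topologicalClosure.FiniteIndex := by
  set K := (H.map β).topologicalClosure
  have : T1Space (B ⧸ K) := QuotientGroup.t1Space_iff.2 (H.map β).isClosed_topologicalClosure
  let π : B → B ⧸ K := (↑)
  have hfinite : (Set.range (π ∘ β)).Finite := by
    refine (Set.finite_range fun q : G ⧸ H => π (β q.out)).subset ?_
    rintro _ ⟨g, rfl⟩
    refine ⟨g, (QuotientGroup.eq.2 ?_)⟩
    rw [← map_inv, ← map_mul]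
    exact (H.map β).le_topologicalClosure ⟨_, QuotientGroup.eq.1 (QuotientGroup.out_eq' _), rfl⟩
  have hdense : DenseRange (π ∘ β) :=
    QuotientGroup.mk_surjective.denseRange.comp hβ QuotientGroup.continuous_mk
  have : Finite (B ⧸ K) := Set.finite_univ_iff.1 <| by
    rw [← hdense.closure_range, hfinite.isClosed.closure_eq]; exact hfinite
  exact Subgroup.finiteIndex_of_finite_quotient

lemma MonoidHom.denseRange_toTopologicalClosureMap (β : G →* B) (H : Subgroup G) :
    DenseRange (β.toTopologicalClosureMap H) :=
  ((denseRange_inclusion_iff subset_closure).2 subset_rfl).comp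
    (β.subgroupMap_surjective H).denseRange (continuous_inclusion subset_closure)

end Bohr

namespace IsBohrCompactification

variable {G B : Type} [Group G] [TopologicalSpace G] [IsTopologicalGroup G] [Group B]
  [TopologicalSpace B] [IsTopologicalGroup B] {β : G →* B}

lemma exists_extension_toTopologicalClosureMap (hB : IsBohrCompactification G B β)
    {H : Subgroup G} [H.FiniteIndex] (hH : IsOpen (H : Set G)) {C : Type} [Group C]
    [TopologicalSpace C] [IsTopologicalGroup C] [CompactSpace C] [T2Space C]
    {α : H →* C} (hα : Continuous α) :
    ∃ α' : (H.map β).topologicalClosure →* C, Continuous α' ∧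
      α'.comp (β.toTopologicalClosureMap H) = α := by
  obtain ⟨Φ, hΦ, hΦβ⟩ := hB.2.2.2.2.2 _ _ (continuous_inducedWreath H hH hα)
  let S := (PermWreath.stabilizer (C := C) ((1 : G) : G ⧸ H)).comap Φ
  have hK : (H.map β).topologicalClosure ≤ S := by
    refine Subgroup.topologicalClosure_minimal _ ?_
      ((PermWreath.isClosed_stabilizer _).preimage hΦ)
    rintro _ ⟨h, hh, rfl⟩
    rw [Subgroup.mem_comap, ← MonoidHom.comp_apply, hΦβ]
    exact inducedWreath_mem_stabilizer H α ⟨h, hh⟩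
  refine ⟨(PermWreath.coeffAt _).comp ((Φ.comp (Subgroup.subtype _)).codRestrict _ fun k => hK k.2),
    (PermWreath.continuous_coeffAt _).comp ((hΦ.comp continuous_subtype_val).subtype_mk _), ?_⟩
  ext h
  show (Φ (β h)).coeff _ = α h
  rw [← MonoidHom.comp_apply, hΦβ, inducedWreath_coeff_one]

lemma toTopologicalClosureMap (hB : IsBohrCompactification G B β) {H : Subgroup G}
    [H.FiniteIndex] (hH : IsOpen (H : Set G)) :
    IsBohrCompactification H (H.map β).topologicalClosure (β.toTopologicalClosureMap H) := by
  have : CompactSpace B := hB.2.2.1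
  have : T2Space B := hB.2.2.2.1
  exact ⟨(hB.1.comp continuous_subtype_val).subtype_mk _, β.denseRange_toTopologicalClosureMap H,
    isCompact_iff_compactSpace.1 (H.map β).isClosed_topologicalClosure.isCompact, inferInstance,
    inferInstance, fun C _ _ _ _ _ α hα => hB.exists_extension_toTopologicalClosureMap hH hα⟩

end IsBohrCompactification

theorem bohr_of_finiteIndex_subgroup_general (G B : Type) [Group G] [TopologicalSpace G]
    [IsTopologicalGroup G] [Group B] [TopologicalSpace B] [IsTopologicalGroup B]
    (β : G →* B) (hB : IsBohrCompactification G B β)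
    (H : Subgroup G) (hclosed : IsClosed (H : Set G)) (hfin : H.FiniteIndex) :
    (((H.map β).topologicalClosure).FiniteIndex) ∧
    IsBohrCompactification H ((H.map β).topologicalClosure)
      (MonoidHom.codRestrict (β.comp H.subtype) (H.map β).topologicalClosure
        (fun h => Subgroup.le_topologicalClosure _ ⟨h, h.2, rfl⟩)) ∧
    (Subtype.val '' connectedComponent (1 : (H.map β).topologicalClosure)
      = connectedComponent (1 : B)) := by
  have hK := Subgroup.finiteIndex_topologicalClosure_map hB.2.1 H
  have hKclosed := (H.map β).isClosed_topologicalClosure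
  have hKclopen : IsClopen ((H.map β).topologicalClosure : Set B) :=
    ⟨hKclosed, Subgroup.isOpen_of_isClosed_of_finiteIndex _ hKclosed⟩
  refine ⟨hK, hB.toTopologicalClosureMap (H.isOpen_of_isClosed_of_finiteIndex hclosed), ?_⟩
  exact (connectedComponentIn_eq_image (one_mem _)).symm.trans
    (hKclopen.connectedComponentIn_eq (one_mem _))

/-- for a closed finite-index subgroup `H ≤ G`, the closure `K` of `β(H)` in
`Bohr(G)` has finite index, `(K, β|_H)` is a Bohr compactification of `H`, and `K` has the
same identity component as `Bohr(G)`. -/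
theorem bohr_of_finiteIndex_subgroup (G B : Type) [Group G] [TopologicalSpace G]
    [IsTopologicalGroup G] [Group B] [TopologicalSpace B] [IsTopologicalGroup B]
    [CompactSpace B] [T2Space B]
    (β : G →* B) (hB : IsBohrCompactification G B β)
    (H : Subgroup G) (hclosed : IsClosed (H : Set G)) (hfin : H.FiniteIndex) :
    (((H.map β).topologicalClosure).FiniteIndex) ∧
    IsBohrCompactification H ((H.map β).topologicalClosure)
      (MonoidHom.codRestrict (β.comp H.subtype) (H.map β).topologicalClosure
        (fun h => Subgroup.le_topologicalClosure _ ⟨h, h.2, rfl⟩)) ∧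
    (Subtype.val '' connectedComponent (1 : (H.map β).topologicalClosure)
      = connectedComponent (1 : B)) :=
  bohr_of_finiteIndex_subgroup_general G B β hB H hclosed hfin
end

section
/- Let G be a topological group with Bohr compactification (Bohr(G), β), and let N be a closed normal subgroup of G. Let K_N be the closure of β(N) in Bohr(G). Then K_N is a normal subgroup of Bohr(G), β induces a continuous homomorphism ᾱ : G/N → Bohr(G)/K_N, and (Bohr(G)/K_N, ᾱ) is a Bohr compactification of G/N. -/
/-!
The image `β(N)` is normalized by the dense subgroup `β(G)`, hence its closure `K_N` is normalized
by all of `Bohr(G)`. A continuous homomorphism `G/N → C` into a compact group lifts along `β` to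
`Bohr(G) → C`; its kernel is closed and contains `β(N)`, so it contains `K_N` and the lift
factors through `Bohr(G)/K_N`.
-/

open QuotientGroup

theorem QuotientGroup.continuous_map {G B : Type*} [Group G] [TopologicalSpace G] [Group B]
    [TopologicalSpace B] {N : Subgroup G} [N.Normal] {M : Subgroup B} [M.Normal] {f : G →* B}
    (hf : Continuous f) (h : N ≤ M.comap f) : Continuous (map N M f h) :=
  (isQuotientMap_mk N).continuous_iff.mpr (continuous_mk.comp hf)

theorem QuotientGroup.denseRange_map {G B : Type*} [Group G] [Group B] [TopologicalSpace B]
    {N : Subgroup G} [N.Normal] {M : Subgroup B} [M.Normal] {f : G →* B} (hf : DenseRange f)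
    (h : N ≤ M.comap f) : DenseRange (map N M f h) :=
  (mk_surjective.denseRange.comp hf continuous_mk).mono (Set.range_comp_subset_range mk _)

section

variable {G B : Type} [Group G] [Group B] [TopologicalSpace B] [IsTopologicalGroup B]

theorem Subgroup.normal_topologicalClosure_map_of_denseRange {f : G →* B} (hf : DenseRange f)
    (N : Subgroup G) [hN : N.Normal] : ((N.map f).topologicalClosure).Normal := by
  have conj_mem_of_range : ∀ g, ∀ k ∈ (N.map f).topologicalClosure,
      f g * k * (f g)⁻¹ ∈ (N.map f).topologicalClosure := by
    intro g k hk
    apply map_mem_closure (IsTopologicalGroup.continuous_conj (f g)) hk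
    rintro _ ⟨n, hn, rfl⟩
    exact ⟨g * n * g⁻¹, hN.conj_mem n hn g, by simp⟩
  refine ⟨fun k hk b => ?_⟩
  have hclosed : IsClosed {b : B | b * k * b⁻¹ ∈ (N.map f).topologicalClosure} :=
    (N.map f).isClosed_topologicalClosure.preimage (by fun_prop)
  exact hf.induction_on b hclosed fun g => conj_mem_of_range g k hk

variable [TopologicalSpace G]

theorem IsBohrCompactification.quotient {β : G →* B} (hB : IsBohrCompactification G B β)
    (N : Subgroup G) [N.Normal] [((N.map β).topologicalClosure).Normal] :
    IsBohrCompactification (G ⧸ N) (B ⧸ (N.map β).topologicalClosure)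
      (map N _ β fun _ hn => (N.map β).le_topologicalClosure (N.mem_map_of_mem β hn)) := by
  obtain ⟨hβc, hβd, _, _, _, huniv⟩ := hB
  have : IsClosed ((N.map β).topologicalClosure : Set B) := Subgroup.isClosed_topologicalClosure _
  refine ⟨continuous_map hβc _, denseRange_map hβd _, inferInstance, inferInstance,
    inferInstance, fun C _ _ _ _ _ α hα => ?_⟩
  obtain ⟨α', hα'c, hα'β⟩ := huniv C (α.comp (mk' N)) (hα.comp continuous_mk)
  have hker : (N.map β).topologicalClosure ≤ α'.ker := by
    refine Subgroup.topologicalClosure_minimal _ ?_ (isClosed_singleton.preimage hα'c)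
    rintro _ ⟨n, hn, rfl⟩
    rw [MonoidHom.mem_ker, ← MonoidHom.comp_apply, hα'β, MonoidHom.comp_apply,
      mk'_apply, (eq_one_iff n).mpr hn, map_one]
  refine ⟨lift _ α' hker, (isQuotientMap_mk _).continuous_iff.mpr hα'c, ?_⟩
  ext x
  exact DFunLike.congr_fun hα'β x

end

theorem bohr_of_quotient_general (G B : Type) [Group G] [TopologicalSpace G]
    [Group B] [TopologicalSpace B] [IsTopologicalGroup B]
    (β : G →* B) (hB : IsBohrCompactification G B β)
    (N : Subgroup G) [hN : N.Normal] :
    ((N.map β).topologicalClosure).Normal ∧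
    ∀ hn : ((N.map β).topologicalClosure).Normal,
      haveI := hn
      ∃ f : (G ⧸ N) →* (B ⧸ (N.map β).topologicalClosure),
        Continuous f ∧
        (∀ g : G, f ((g : G ⧸ N)) = ((β g : B) : B ⧸ (N.map β).topologicalClosure)) ∧
        IsBohrCompactification (G ⧸ N) (B ⧸ (N.map β).topologicalClosure) f :=
  ⟨Subgroup.normal_topologicalClosure_map_of_denseRange hB.2.1 N,
    fun _ => ⟨_, continuous_map hB.1 _, fun _ => rfl, hB.quotient N⟩⟩

/-- for a closed normal subgroup `N` of `G`, the closure `K_N` of `β(N)` is normal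
in `Bohr(G)`, and the induced map `G/N → Bohr(G)/K_N` is a Bohr compactification of `G/N`. -/
theorem bohr_of_quotient (G B : Type) [Group G] [TopologicalSpace G] [IsTopologicalGroup G]
    [Group B] [TopologicalSpace B] [IsTopologicalGroup B] [CompactSpace B] [T2Space B]
    (β : G →* B) (hB : IsBohrCompactification G B β)
    (N : Subgroup G) [hN : N.Normal] (hclosed : IsClosed (N : Set G)) :
    ((N.map β).topologicalClosure).Normal ∧
    ∀ hn : ((N.map β).topologicalClosure).Normal,
      haveI := hn
      ∃ f : (G ⧸ N) →* (B ⧸ (N.map β).topologicalClosure),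
        Continuous f ∧
        (∀ g : G, f ((g : G ⧸ N)) = ((β g : B) : B ⧸ (N.map β).topologicalClosure)) ∧
        IsBohrCompactification (G ⧸ N) (B ⧸ (N.map β).topologicalClosure) f :=
  bohr_of_quotient_general G B β hB N (hN := hN)
end

section
/- Let Γ be a finitely generated group with finite symmetric generating set S, let γ ∈ Γ, let π : Γ → U(N) be a unitary representation, and suppose λ is an eigenvalue of π(γ) and σ an embedding of the field generated by the matrix entries of π(Γ) into a locally compact field k with absolute value |·| such that |σ(λ)| > 1. Then there is a constant C ≥ 1 (the maximum of the operator norms of the matrices σ(π(s)), s ∈ S) such that ℓ_S(γ^n) · log C ≥ n · log|σ(λ)| for all n ∈ ℕ; in particular liminf_n ℓ_S(γ^n)/n > 0. -/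
open Filter Topology Matrix

/-- The word length of `γ` with respect to the generating set `S` (assumed symmetric). -/
noncomputable def wordLength {Γ : Type} [Group Γ] (S : Finset Γ) (γ : Γ) : ℕ :=
  sInf {n : ℕ | ∃ l : List Γ, l.length = n ∧ (∀ x ∈ l, x ∈ S) ∧ l.prod = γ}

/-!
Since `det (π γ - λ) = 0` and `σ` is a ring map, `σ λ` is an eigenvalue of `σ (π γ)`, with an
eigenvector `w` over `k`. Writing `γ ^ n` as a word of length `ℓ_S (γ ^ n)` in `S` expresses
`σ (π (γ ^ n))` as a product of that many matrices each stretching vectors by at most `C`, so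
`‖σ λ‖ ^ n ‖w‖ ≤ C ^ ℓ_S (γ ^ n) ‖w‖`. Taking logarithms gives the bound; together with
`ℓ_S (γ ^ n) ≤ n ℓ_S γ` it keeps `ℓ_S (γ ^ n) / n` between two positive constants.
-/

section WordLength

variable {Γ : Type} [Group Γ] {S : Finset Γ}

theorem exists_list_prod_eq_of_closure_eq_top (hsym : ∀ s ∈ S, s⁻¹ ∈ S)
    (hgen : Subgroup.closure (S : Set Γ) = ⊤) (g : Γ) :
    ∃ l : List Γ, (∀ x ∈ l, x ∈ S) ∧ l.prod = g := by
  have hS : (S : Set Γ) ∪ (S : Set Γ)⁻¹ = S :=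
    Set.union_eq_self_of_subset_right fun x hx => by simpa using hsym _ hx
  apply Submonoid.exists_list_of_mem_closure
  rw [← hS, ← Subgroup.closure_toSubmonoid, hgen]
  exact Subgroup.mem_top g

theorem wordLength_le_length {l : List Γ} (hl : ∀ x ∈ l, x ∈ S) :
    wordLength S l.prod ≤ l.length :=
  Nat.sInf_le ⟨l, rfl, hl, rfl⟩

theorem exists_list_length_eq_wordLength (hsym : ∀ s ∈ S, s⁻¹ ∈ S)
    (hgen : Subgroup.closure (S : Set Γ) = ⊤) (g : Γ) :
    ∃ l : List Γ, l.length = wordLength S g ∧ (∀ x ∈ l, x ∈ S) ∧ l.prod = g := by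
  obtain ⟨l, hl, rfl⟩ := exists_list_prod_eq_of_closure_eq_top hsym hgen g
  exact Nat.sInf_mem (s := {n | ∃ l' : List Γ, l'.length = n ∧ (∀ x ∈ l', x ∈ S) ∧ _})
    ⟨l.length, l, rfl, hl, rfl⟩

theorem wordLength_mul_le (hsym : ∀ s ∈ S, s⁻¹ ∈ S)
    (hgen : Subgroup.closure (S : Set Γ) = ⊤) (g h : Γ) :
    wordLength S (g * h) ≤ wordLength S g + wordLength S h := by
  obtain ⟨l₁, hlen₁, hl₁, rfl⟩ := exists_list_length_eq_wordLength hsym hgen g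
  obtain ⟨l₂, hlen₂, hl₂, rfl⟩ := exists_list_length_eq_wordLength hsym hgen h
  rw [← hlen₁, ← hlen₂, ← List.length_append, ← List.prod_append]
  exact wordLength_le_length fun x hx => (List.mem_append.1 hx).elim (hl₁ x) (hl₂ x)

theorem wordLength_pow_le (hsym : ∀ s ∈ S, s⁻¹ ∈ S)
    (hgen : Subgroup.closure (S : Set Γ) = ⊤) (g : Γ) (n : ℕ) :
    wordLength S (g ^ n) ≤ n * wordLength S g := by
  induction n with
  | zero => simpa using wordLength_le_length (S := S) (l := []) (by simp)
  | succ n ih =>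
    calc wordLength S (g ^ (n + 1)) ≤ wordLength S (g ^ n) + wordLength S g :=
          pow_succ g n ▸ wordLength_mul_le hsym hgen _ _
      _ ≤ (n + 1) * wordLength S g := by rw [add_one_mul]; omega

end WordLength

section MatrixEigenvalue

variable {n : Type*} [Fintype n] [DecidableEq n]

theorem Matrix.exists_mulVec_eq_smul_iff_det_eq_zero {K : Type*} [Field K]
    (A : Matrix n n K) (μ : K) :
    (∃ v ≠ 0, A *ᵥ v = μ • v) ↔ (A - μ • 1).det = 0 := by
  simp only [← exists_mulVec_eq_zero_iff, sub_mulVec, smul_mulVec, one_mulVec, sub_eq_zero]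

theorem Matrix.exists_map_mulVec_eq_smul_iff {K K' : Type*} [Field K] [Field K']
    (f : K →+* K') (A : Matrix n n K) (μ : K) :
    (∃ v ≠ 0, A.map f *ᵥ v = f μ • v) ↔ ∃ v ≠ 0, A *ᵥ v = μ • v := by
  have hmap : A.map f - f μ • 1 = (A - μ • 1).map f := by
    ext i j
    by_cases h : i = j <;> simp [h]
  rw [exists_mulVec_eq_smul_iff_det_eq_zero, exists_mulVec_eq_smul_iff_det_eq_zero, hmap,
    ← RingHom.mapMatrix_apply, ← RingHom.map_det, map_eq_zero]

end MatrixEigenvalue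

def MonoidHom.matrixCodRestrict {G R S : Type*} [Monoid G] [Ring R] [SetLike S R]
    [SubringClass S R] {n : Type*} [Fintype n] [DecidableEq n] (ρ : G →* Matrix n n R) (L : S)
    (h : ∀ g i j, ρ g i j ∈ L) : G →* Matrix n n L where
  toFun g := Matrix.of fun i j => ⟨ρ g i j, h g i j⟩
  map_one' := Matrix.map_injective Subtype.val_injective <| by
    simp only [map_one]
    ext i j
    by_cases hij : i = j <;> simp [hij]
  map_mul' g g' := Matrix.map_injective Subtype.val_injective <| by
    change _ = (SubringClass.subtype L).mapMatrix (_ * _)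
    rw [RingHom.map_mul]
    ext i j
    simp [Matrix.mul_apply]

section NormBounds

variable {n : Type*} [Fintype n] {k : Type*}

theorem norm_list_prod_mulVec_le [NormedRing k] [DecidableEq n] {C : ℝ} (hC : 0 ≤ C)
    (l : List (Matrix n n k)) (hl : ∀ A ∈ l, ∀ ξ : n → k, ‖A *ᵥ ξ‖ ≤ C * ‖ξ‖) (ξ : n → k) :
    ‖l.prod *ᵥ ξ‖ ≤ C ^ l.length * ‖ξ‖ := by
  induction l with
  | nil => simp
  | cons A l ih =>
    rw [List.prod_cons, ← mulVec_mulVec, List.length_cons, pow_succ', mul_assoc]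
    refine (hl A List.mem_cons_self _).trans (mul_le_mul_of_nonneg_left ?_ hC)
    exact ih fun B hB => hl B (List.mem_cons_of_mem A hB)

theorem exists_norm_mulVec_le {ι : Type*} [NormedRing k] (S : Finset ι) (M : ι → Matrix n n k)
    (c : ℝ) : ∃ C, c ≤ C ∧ ∀ s ∈ S, ∀ ξ : n → k, ‖M s *ᵥ ξ‖ ≤ C * ‖ξ‖ := by
  let := Matrix.linftyOpSeminormedAddCommGroup (m := n) (n := n) (α := k)
  refine ⟨max c ((S.sup fun s => ‖M s‖₊ : NNReal) : ℝ), le_max_left _ _, fun s hs ξ => ?_⟩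
  refine (linfty_opNorm_mulVec (M s) ξ).trans (mul_le_mul_of_nonneg_right ?_ (norm_nonneg ξ))
  exact (NNReal.coe_le_coe.2 (Finset.le_sup (f := fun s => ‖M s‖₊) hs)).trans (le_max_right _ _)

variable {Γ : Type} [Group Γ] {S : Finset Γ} [NormedField k] [DecidableEq n]

theorem norm_mulVec_le_pow_wordLength (hsym : ∀ s ∈ S, s⁻¹ ∈ S)
    (hgen : Subgroup.closure (S : Set Γ) = ⊤) (ρ : Γ →* Matrix n n k) {C : ℝ} (hC : 0 ≤ C)
    (hS : ∀ s ∈ S, ∀ ξ : n → k, ‖ρ s *ᵥ ξ‖ ≤ C * ‖ξ‖) (g : Γ) (ξ : n → k) :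
    ‖ρ g *ᵥ ξ‖ ≤ C ^ wordLength S g * ‖ξ‖ := by
  obtain ⟨l, hlen, hl, rfl⟩ := exists_list_length_eq_wordLength hsym hgen g
  rw [← hlen, ← List.length_map ρ, map_list_prod]
  refine norm_list_prod_mulVec_le hC _ (fun A hA => ?_) ξ
  obtain ⟨s, hs, rfl⟩ := List.mem_map.1 hA
  exact hS s (hl s hs)

theorem norm_pow_le_pow_wordLength_of_mulVec_eq_smul (hsym : ∀ s ∈ S, s⁻¹ ∈ S)
    (hgen : Subgroup.closure (S : Set Γ) = ⊤) (ρ : Γ →* Matrix n n k) {C : ℝ} (hC : 0 ≤ C)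
    (hS : ∀ s ∈ S, ∀ ξ : n → k, ‖ρ s *ᵥ ξ‖ ≤ C * ‖ξ‖) {γ : Γ} {μ : k} {w : n → k}
    (hw : w ≠ 0) (hμ : ρ γ *ᵥ w = μ • w) (m : ℕ) :
    ‖μ‖ ^ m ≤ C ^ wordLength S (γ ^ m) := by
  have hpow : ρ (γ ^ m) *ᵥ w = μ ^ m • w := by
    induction m with
    | zero => simp
    | succ m ih =>
      rw [pow_succ, map_mul, ← mulVec_mulVec, hμ, mulVec_smul, ih, smul_smul, pow_succ']
  have h := norm_mulVec_le_pow_wordLength hsym hgen ρ hC hS (γ ^ m) w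
  rw [hpow, norm_smul, norm_pow] at h
  exact le_of_mul_le_mul_right h (norm_pos_iff.2 hw)

end NormBounds

theorem pos_liminf_div_of_linear_bounds {u : ℕ → ℝ} {c a : ℝ} (hc : 0 < c)
    (hlow : ∀ m, c * m ≤ u m) (hup : ∀ m, u m ≤ a * m) :
    0 < liminf (fun m : ℕ => u m / m) atTop := by
  have hbdd : IsCoboundedUnder (· ≥ ·) atTop (fun m : ℕ => u m / m) :=
    isCoboundedUnder_ge_of_le atTop (x := max a 0) fun m => by
      rcases m.eq_zero_or_pos with rfl | hm
      · simp
      · exact (div_le_iff₀ (Nat.cast_pos.2 hm)).2 ((hup m).trans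
          (mul_le_mul_of_nonneg_right (le_max_left a 0) m.cast_nonneg))
  refine hc.trans_le (le_liminf_of_le hbdd ?_)
  filter_upwards [eventually_gt_atTop 0] with m hm
  exact (le_div_iff₀ (Nat.cast_pos.2 hm)).2 (hlow m)

theorem wordLength_lower_bound_of_eigenvalue_general {Γ : Type} [Group Γ] (S : Finset Γ)
    (hsym : ∀ s ∈ S, s⁻¹ ∈ S) (hgen : Subgroup.closure (S : Set Γ) = ⊤) (γ : Γ)
    (N : ℕ) (π : Γ →* Matrix.unitaryGroup (Fin N) ℂ)
    (L : Subfield ℂ) (hL : ∀ (g : Γ) (i j : Fin N), ((π g : Matrix (Fin N) (Fin N) ℂ) i j) ∈ L)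
    (k : Type) [NormedField k] (σ : L →+* k)
    (lam : ℂ) (hlam : lam ∈ L)
    (heig : ∃ v : Fin N → ℂ, v ≠ 0 ∧ (π γ : Matrix (Fin N) (Fin N) ℂ).mulVec v = lam • v)
    (hgt : 1 < ‖σ ⟨lam, hlam⟩‖) :
    ∃ C : ℝ, 1 ≤ C ∧
      (∀ s ∈ S, ∀ ξ : Fin N → k,
        ‖(Matrix.of fun i j : Fin N =>
            σ ⟨(π s : Matrix (Fin N) (Fin N) ℂ) i j, hL s i j⟩).mulVec ξ‖ ≤ C * ‖ξ‖) ∧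
      (∀ n : ℕ, (n : ℝ) * Real.log ‖σ ⟨lam, hlam⟩‖ ≤ (wordLength S (γ ^ n) : ℝ) * Real.log C) ∧
      0 < liminf (fun n : ℕ => (wordLength S (γ ^ n) : ℝ) / n) atTop := by
  set μ : L := ⟨lam, hlam⟩
  let P := ((unitaryGroup (Fin N) ℂ).subtype.comp π).matrixCodRestrict L hL
  let ρ := σ.mapMatrix.toMonoidHom.comp P
  obtain ⟨w, hw, hwμ⟩ := (exists_map_mulVec_eq_smul_iff σ (P γ) μ).2 <|
    (exists_map_mulVec_eq_smul_iff L.subtype (P γ) μ).1 heig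
  obtain ⟨C, hμC, hS⟩ := exists_norm_mulVec_le S ρ ‖σ μ‖
  have hC : 1 < C := hgt.trans_le hμC
  have hlog (n : ℕ) : (n : ℝ) * Real.log ‖σ μ‖ ≤ wordLength S (γ ^ n) * Real.log C := by
    rw [← Real.log_pow, ← Real.log_pow]
    exact Real.log_le_log (pow_pos (one_pos.trans hgt) n) <|
      norm_pow_le_pow_wordLength_of_mulVec_eq_smul hsym hgen ρ (one_pos.trans hC).le hS hw hwμ n
  refine ⟨C, hC.le, hS, hlog, pos_liminf_div_of_linear_bounds (a := wordLength S γ)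
    (div_pos (Real.log_pos hgt) (Real.log_pos hC)) (fun n => ?_) (fun n => ?_)⟩
  · rw [div_mul_eq_mul_div, div_le_iff₀ (Real.log_pos hC), mul_comm]
    exact hlog n
  · rw [mul_comm]
    exact_mod_cast wordLength_pow_le hsym hgen γ n

/-- if `λ` is an eigenvalue of `π(γ)` and `σ` embeds the field containing the
matrix entries of `π(Γ)` into a locally compact normed field `k` with `|σ(λ)| > 1`, then
taking `C ≥ 1` to be (a bound for) the operator norms of the matrices `σ(π(s))`, `s ∈ S`,
one has `ℓ_S(γ^n)·log C ≥ n·log|σ(λ)|` for all `n`; in particular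
`liminf_n ℓ_S(γ^n)/n > 0`. -/
theorem wordLength_lower_bound_of_eigenvalue {Γ : Type} [Group Γ] (S : Finset Γ)
    (hsym : ∀ s ∈ S, s⁻¹ ∈ S) (hgen : Subgroup.closure (S : Set Γ) = ⊤) (γ : Γ)
    (N : ℕ) (π : Γ →* Matrix.unitaryGroup (Fin N) ℂ)
    (L : Subfield ℂ) (hL : ∀ (g : Γ) (i j : Fin N), ((π g : Matrix (Fin N) (Fin N) ℂ) i j) ∈ L)
    (k : Type) [NormedField k] [LocallyCompactSpace k] (σ : L →+* k)
    (lam : ℂ) (hlam : lam ∈ L)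
    (heig : ∃ v : Fin N → ℂ, v ≠ 0 ∧ (π γ : Matrix (Fin N) (Fin N) ℂ).mulVec v = lam • v)
    (hgt : 1 < ‖σ ⟨lam, hlam⟩‖) :
    ∃ C : ℝ, 1 ≤ C ∧
      (∀ s ∈ S, ∀ ξ : Fin N → k,
        ‖(Matrix.of fun i j : Fin N =>
            σ ⟨(π s : Matrix (Fin N) (Fin N) ℂ) i j, hL s i j⟩).mulVec ξ‖ ≤ C * ‖ξ‖) ∧
      (∀ n : ℕ, (n : ℝ) * Real.log ‖σ ⟨lam, hlam⟩‖ ≤ (wordLength S (γ ^ n) : ℝ) * Real.log C) ∧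
      0 < liminf (fun n : ℕ => (wordLength S (γ ^ n) : ℝ) / n) atTop :=
  wordLength_lower_bound_of_eigenvalue_general S hsym hgen γ N π L hL k σ lam hlam heig hgt
end

section
/- Let Γ be a finitely generated nilpotent group and π : Γ → U(N) a finite-dimensional unitary representation. Then π([Γ, Γ]) is a finite subgroup of U(N). -/
/-!
Let `K = π(Γ) ≤ U(N)` and `z ∈ Z(K) ∩ [K, K]`. Each eigenspace `E` of `z` is `K`-invariant, and
`g ↦ det (g|_E)` is a homomorphism to an abelian group, so it kills `z`; since `z` acts on `E` as
its eigenvalue `μ`, we get `μ ^ dim E = 1`, and `dim E ∣ N!`. A unitary matrix is normal, so the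
functional calculus turns this into `z ^ N! = 1`.

Such a bound on central commutators propagates up the upper central series: if the class of `g` is
central in `K ⧸ Z(K)`, then every `⁅g, h⁆` is central, so `⁅g ^ e, h⁆ = ⁅g, h⁆ ^ e = 1`. Hence
`K ⧸ Z(K)` is a finitely generated nilpotent torsion group, thus finite, and Schur's theorem shows
that `[K, K] = π([Γ, Γ])` is finite.
-/

open Subgroup Module
open scoped commutatorElement IsMulCommutative Nat Matrix.Norms.L2Operator

section GroupTheory

variable {G : Type*} [Group G]

theorem commutatorElement_mul_left_of_mem_center {z : G} (hz : z ∈ center G) (g h : G) :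
    ⁅g * z, h⁆ = ⁅g, h⁆ :=
  calc ⁅g * z, h⁆ = g * (z * h * z⁻¹) * g⁻¹ * h⁻¹ := by group
    _ = ⁅g, h⁆ := by
      rw [Commute.mul_inv_cancel (mem_center_iff.mp hz h).symm, commutatorElement_def]

theorem commutatorElement_mul_mul_of_mem_center {z w : G} (hz : z ∈ center G) (hw : w ∈ center G)
    (g h : G) : ⁅g * z, h * w⁆ = ⁅g, h⁆ := by
  rw [commutatorElement_mul_left_of_mem_center hz, ← commutatorElement_inv,
    commutatorElement_mul_left_of_mem_center hw, commutatorElement_inv]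

instance finite_commutatorSet_of_finiteIndex_center [(center G).FiniteIndex] :
    Finite (commutatorSet G) := by
  refine (Set.finite_range fun p : (G ⧸ center G) × (G ⧸ center G) ↦ ⁅p.1.out, p.2.out⁆)
    |>.subset ?_ |>.to_subtype
  rintro _ ⟨g, h, rfl⟩
  obtain ⟨z, hg⟩ := QuotientGroup.mk_out_eq_mul (center G) g
  obtain ⟨w, hh⟩ := QuotientGroup.mk_out_eq_mul (center G) h
  exact ⟨(g, h), by simp only [hg, hh, commutatorElement_mul_mul_of_mem_center z.2 w.2]⟩

theorem commutatorElement_pow_left_of_commute {z h : G} (hc : Commute z ⁅z, h⁆) (n : ℕ) :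
    ⁅z ^ n, h⁆ = ⁅z, h⁆ ^ n := by
  induction n with
  | zero => simp
  | succ n ih =>
    calc ⁅z ^ (n + 1), h⁆ = z * ⁅z ^ n, h⁆ * z⁻¹ * ⁅z, h⁆ := by
          simp only [commutatorElement_def]; group
      _ = ⁅z, h⁆ ^ (n + 1) := by rw [ih, (hc.pow_right n).eq, mul_inv_cancel_right, pow_succ]

theorem commutatorElement_mem_center_of_mk_mem_center {g : G}
    (hg : (g : G ⧸ center G) ∈ center (G ⧸ center G)) (h : G) : ⁅g, h⁆ ∈ center G := by
  rw [← QuotientGroup.eq_one_iff, ← QuotientGroup.mk'_apply, map_commutatorElement,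
    commutatorElement_eq_one_iff_mul_comm]
  exact (mem_center_iff.mp hg _).symm

theorem pow_mem_center_of_mk_mem_center {e : ℕ}
    (he : ∀ c ∈ center G, c ∈ commutator G → c ^ e = 1) {g : G}
    (hg : (g : G ⧸ center G) ∈ center (G ⧸ center G)) : g ^ e ∈ center G := by
  refine mem_center_iff.mpr fun h ↦ ?_
  have hcen := commutatorElement_mem_center_of_mk_mem_center hg h
  have hpow : ⁅g ^ e, h⁆ = 1 := by
    rw [commutatorElement_pow_left_of_commute (mem_center_iff.mp hcen g) e,
      he _ hcen (commutator_mem_commutator (mem_top g) (mem_top h))]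
  exact (commutatorElement_eq_one_iff_mul_comm.mp hpow).symm

theorem exists_pow_mem_center [Group.IsNilpotent G] {e : ℕ} (he₀ : 0 < e)
    (he : ∀ c ∈ center G, c ∈ commutator G → c ^ e = 1) (g : G) :
    ∃ m, 0 < m ∧ g ^ m ∈ center G := by
  revert he g
  refine Group.nilpotent_center_quotient_ind (P := fun G _ _ ↦
    (∀ c ∈ center G, c ∈ commutator G → c ^ e = 1) → ∀ g : G, ∃ m, 0 < m ∧ g ^ m ∈ center G)
    G ?_ ?_
  · intro G _ _ _ g
    exact ⟨1, one_pos, mem_center_iff.mpr fun _ ↦ Subsingleton.elim _ _⟩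
  · intro G _ _ ih he g
    have heQ : ∀ c ∈ center (G ⧸ center G), c ∈ commutator (G ⧸ center G) → c ^ e = 1 := by
      intro c hc _
      obtain ⟨c, rfl⟩ := QuotientGroup.mk_surjective c
      rw [← QuotientGroup.mk_pow, QuotientGroup.eq_one_iff]
      exact pow_mem_center_of_mk_mem_center he hc
    obtain ⟨m, hm, hgm⟩ := ih heQ g
    refine ⟨m * e, Nat.mul_pos hm he₀, ?_⟩
    rw [pow_mul]
    exact pow_mem_center_of_mk_mem_center he hgm

theorem isMulTorsion_quotient_center [Group.IsNilpotent G] {e : ℕ} (he₀ : 0 < e)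
    (he : ∀ c ∈ center G, c ∈ commutator G → c ^ e = 1) : IsMulTorsion (G ⧸ center G) := by
  intro q
  obtain ⟨g, rfl⟩ := QuotientGroup.mk_surjective q
  obtain ⟨m, hm, hgm⟩ := exists_pow_mem_center he₀ he g
  exact isOfFinOrder_iff_pow_eq_one.mpr
    ⟨m, hm, by rwa [← QuotientGroup.mk_pow, QuotientGroup.eq_one_iff]⟩

theorem Group.IsNilpotent.finite_of_fg_isMulTorsion [Group.IsNilpotent G] [Group.FG G]
    (hG : IsMulTorsion G) : Finite G := by
  revert hG
  refine Group.nilpotent_center_quotient_ind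
    (P := fun G _ _ ↦ [Group.FG G] → IsMulTorsion G → Finite G) G ?_ ?_
  · intro G _ _ _ _
    exact Finite.of_subsingleton
  · intro G _ _ ih _ hG
    have : Finite (G ⧸ center G) :=
      ih (hG.of_surjective (QuotientGroup.mk'_surjective (center G)))
    have : (center G).FiniteIndex := finiteIndex_of_finite_quotient
    have : Finite (center G) := CommGroup.finite_of_fg_isMulTorsion _ (hG.subgroup _)
    exact Finite.of_subgroup_quotient (center G)

theorem finite_commutator_of_pow_eq_one_of_mem_center_commutator [Group.FG G]
    [Group.IsNilpotent G] {e : ℕ} (he₀ : 0 < e)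
    (he : ∀ c ∈ center G, c ∈ commutator G → c ^ e = 1) : Finite (commutator G) := by
  have : Finite (G ⧸ center G) :=
    Group.IsNilpotent.finite_of_fg_isMulTorsion (isMulTorsion_quotient_center he₀ he)
  have : (center G).FiniteIndex := finiteIndex_of_finite_quotient
  -- Schur: by `finite_commutatorSet_of_finiteIndex_center` there are finitely many commutators
  infer_instance

end GroupTheory

section Representation

variable {𝕜 G V : Type*} [Field 𝕜] [Group G] [AddCommGroup V] [Module 𝕜 V]

theorem Representation.pow_finrank_eigenspace_eq_one (ρ : Representation 𝕜 G V) {z : G}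
    (hz : z ∈ center G) (hz' : z ∈ commutator G) (μ : 𝕜) :
    μ ^ finrank 𝕜 (End.eigenspace (ρ z) μ) = 1 := by
  set E := End.eigenspace (ρ z) μ
  have hE : ∀ g, E ≤ E.comap (ρ g) := fun g ↦
    End.mapsTo_genEigenspace_of_comm (Commute.map (mem_center_iff.mp hz g).symm ρ) μ 1
  let δ : G →* 𝕜 := LinearMap.det.comp (ρ.subrepresentation E hE)
  have hδ : δ z = 1 := by
    simpa [Units.ext_iff] using Abelianization.commutator_subset_ker δ.toHomUnits hz'
  have hzE : ρ.subrepresentation E hE z = μ • 1 := by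
    ext v
    exact End.mem_eigenspace_iff.mp v.2
  calc μ ^ finrank 𝕜 E = δ z := by simp [δ, hzE, LinearMap.det_smul]
    _ = 1 := hδ

theorem Representation.pow_factorial_finrank_eq_one [FiniteDimensional 𝕜 V]
    (ρ : Representation 𝕜 G V) {z : G} (hz : z ∈ center G) (hz' : z ∈ commutator G) {μ : 𝕜}
    (hμ : End.HasEigenvalue (ρ z) μ) : μ ^ (finrank 𝕜 V)! = 1 := by
  obtain ⟨k, hk⟩ : finrank 𝕜 (End.eigenspace (ρ z) μ) ∣ (finrank 𝕜 V)! :=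
    Nat.dvd_factorial (Submodule.one_le_finrank_iff.mpr (End.hasEigenvalue_iff.mp hμ))
      (Submodule.finrank_le _)
  rw [hk, pow_mul, ρ.pow_finrank_eigenspace_eq_one hz hz', one_pow]

end Representation

theorem pow_eq_one_of_forall_mem_spectrum_pow_eq_one {A : Type*} [CStarAlgebra A] {a : A}
    [IsStarNormal a] {k : ℕ} (h : ∀ μ ∈ spectrum ℂ a, μ ^ k = 1) : a ^ k = 1 :=
  calc a ^ k = cfc (· ^ k : ℂ → ℂ) a := (cfc_pow_id a k).symm
    _ = cfc (fun _ : ℂ ↦ 1) a := cfc_congr h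
    _ = 1 := cfc_const_one ℂ a

theorem Matrix.UnitaryGroup.pow_factorial_eq_one_of_mem_center_commutator {n G : Type*}
    [Fintype n] [DecidableEq n] [Group G] (ρ : G →* Matrix.unitaryGroup n ℂ) {z : G}
    (hz : z ∈ center G) (hz' : z ∈ commutator G) : ρ z ^ (Fintype.card n)! = 1 := by
  let σ : Representation ℂ G (n → ℂ) :=
    (Units.coeHom _).comp (Matrix.UnitaryGroup.embeddingGL.comp ρ)
  refine Subtype.ext (pow_eq_one_of_forall_mem_spectrum_pow_eq_one fun μ hμ ↦ ?_)
  rw [← Matrix.spectrum_toLin', ← End.hasEigenvalue_iff_mem_spectrum] at hμ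
  simpa using σ.pow_factorial_finrank_eq_one hz hz' hμ

/-- for a finitely generated nilpotent group `Γ` and a finite-dimensional unitary
representation `π : Γ → U(N)`, the image `π([Γ,Γ])` is a finite subgroup of `U(N)`. -/
theorem image_commutator_finite_of_nilpotent {Γ : Type} [Group Γ] [Group.FG Γ]
    [Group.IsNilpotent Γ] (N : ℕ) (π : Γ →* Matrix.unitaryGroup (Fin N) ℂ) :
    Set.Finite (((commutator Γ).map π : Subgroup (Matrix.unitaryGroup (Fin N) ℂ)) :
      Set (Matrix.unitaryGroup (Fin N) ℂ)) := by
  set K := π.range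
  have : Group.IsNilpotent K := Group.nilpotent_of_surjective _ π.rangeRestrict_surjective
  have : Group.FG K := Group.fg_range π
  have hK : ∀ z ∈ center K, z ∈ commutator K → z ^ N ! = 1 := fun z hz hz' ↦
    K.subtype_injective <| by
      simpa using
        Matrix.UnitaryGroup.pow_factorial_eq_one_of_mem_center_commutator K.subtype hz hz'
  have : Finite (commutator K) :=
    finite_commutator_of_pow_eq_one_of_mem_center_commutator (Nat.factorial_pos N) hK
  rw [map_commutator_eq, ← K.map_subtype_commutator, coe_map]
  exact (Set.toFinite _).image _
end

section
/- Let Γ be a finitely generated nilpotent group and H a finite-index normal subgroup of [Γ, Γ]. Then there exists a normal subgroup Δ of finite index in Γ with Δ ∩ [Γ, Γ] = H. -/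
/-!
Modulo `H` the commutator subgroup becomes finite, so the center `Z` of the finitely generated
group `Γ ⧸ H` has finite index and is a finitely generated abelian group. Its torsion subgroup is
finite, say of exponent `m`; then `Z ^ m` is central (hence normal), of finite index, and meets
every torsion subgroup of `Γ ⧸ H`, in particular the commutator subgroup, trivially. Its
preimage in `Γ` is the required `Δ`.
-/

open Subgroup
open scoped IsMulCommutative

namespace CommGroup

variable {Z : Type*} [CommGroup Z] [Group.FG Z]

instance finite_torsion : Finite (torsion Z) := by
  have : Module.Finite ℤ (Additive Z) := Module.Finite.iff_addGroup_fg.mpr inferInstance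
  have : (torsion Z).FG := (fg_iff_add_fg _).mpr <|
    (Submodule.fg_iff_addSubgroup_fg (AddSubgroup.toIntSubmodule (torsion Z).toAddSubgroup)).mp
      (IsNoetherian.noetherian _)
  have : Group.FG (torsion Z) := (Group.fg_iff_subgroup_fg _).mpr this
  exact finite_of_fg_isMulTorsion _ fun x => Submonoid.isOfFinOrder_coe.mp x.2

theorem finiteIndex_range_powMonoidHom {n : ℕ} (hn : n ≠ 0) :
    (powMonoidHom n : Z →* Z).range.FiniteIndex := by
  rw [finiteIndex_iff_finite_quotient]
  refine finite_of_fg_isMulTorsion _ fun x => ?_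
  obtain ⟨z, rfl⟩ := QuotientGroup.mk_surjective x
  exact isOfFinOrder_iff_pow_eq_one.mpr
    ⟨n, Nat.pos_of_ne_zero hn, (QuotientGroup.eq_one_iff _).mpr ⟨z, rfl⟩⟩

theorem range_powMonoidHom_exponent_inf_torsion :
    (powMonoidHom (Monoid.exponent (torsion Z)) : Z →* Z).range ⊓ torsion Z = ⊥ := by
  rw [eq_bot_iff]
  rintro _ ⟨⟨z, rfl⟩, hz⟩
  have hz_torsion : z ∈ torsion Z := (mem_torsion _).mpr <|
    ((mem_torsion _).mp hz).of_pow (Monoid.ExponentExists.exponent_ne_zero .of_finite)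
  exact congrArg Subtype.val (Monoid.pow_exponent_eq_one (⟨z, hz_torsion⟩ : torsion Z))

theorem exists_finiteIndex_inf_torsion_eq_bot :
    ∃ W : Subgroup Z, W.FiniteIndex ∧ W ⊓ torsion Z = ⊥ :=
  ⟨_, finiteIndex_range_powMonoidHom (Monoid.ExponentExists.exponent_ne_zero .of_finite),
    range_powMonoidHom_exponent_inf_torsion⟩

end CommGroup

namespace Subgroup

variable {G : Type*} [Group G]

theorem normal_of_le_center {N : Subgroup G} (h : N ≤ center G) : N.Normal :=
  ⟨fun n hn g => by rwa [mem_center_iff.mp (h hn) g, mul_inv_cancel_right]⟩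

theorem exists_normal_finiteIndex_inf_eq_bot_of_isMulTorsion [Group.FG G]
    [(center G).FiniteIndex] {N : Subgroup G} (hN : IsMulTorsion N) :
    ∃ W : Subgroup G, W.Normal ∧ W.FiniteIndex ∧ W ⊓ N = ⊥ := by
  obtain ⟨W, hW, hW_torsion⟩ :=
    CommGroup.exists_finiteIndex_inf_torsion_eq_bot (Z := center G)
  refine ⟨W.map (center G).subtype, normal_of_le_center (map_subtype_le W), ⟨?_⟩, ?_⟩
  · rw [index_map_subtype]
    exact mul_ne_zero hW.index_ne_zero FiniteIndex.index_ne_zero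
  · rw [eq_bot_iff]
    rintro _ ⟨⟨w, hw, rfl⟩, hwN⟩
    have hw_torsion : w ∈ CommGroup.torsion (center G) :=
      (center G).subtype_injective.isOfFinOrder_iff.mp (N.subtype.isOfFinOrder (hN ⟨w, hwN⟩))
    have hw_one : w ∈ (⊥ : Subgroup (center G)) := hW_torsion ▸ ⟨hw, hw_torsion⟩
    simp [mem_bot.mp hw_one]

end Subgroup

theorem exists_normal_finiteIndex_inf_commutator_eq_bot {G : Type*} [Group G] [Group.FG G]
    [Finite (commutator G)] :
    ∃ W : Subgroup G, W.Normal ∧ W.FiniteIndex ∧ W ⊓ commutator G = ⊥ := by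
  have : Finite (commutatorSet G) :=
    (commutator G : Set G).toFinite.subset (commutator_eq_closure G ▸ subset_closure)
  exact exists_normal_finiteIndex_inf_eq_bot_of_isMulTorsion isMulTorsion_of_finite

namespace QuotientGroup

variable {G : Type*} [Group G]

theorem finite_map_mk' (H K : Subgroup G) [H.Normal] [(H.subgroupOf K).FiniteIndex] :
    Finite (K.map (mk' H)) := by
  have hker : ((mk' H).comp K.subtype).ker = H.subgroupOf K := by
    rw [← MonoidHom.comap_ker, ker_mk', comap_subtype]
  have hrange : ((mk' H).comp K.subtype).range = K.map (mk' H) := by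
    rw [MonoidHom.range_comp, range_subtype]
  rw [← hrange, ← (quotientKerEquivRange _).finite_iff, hker]
  infer_instance

theorem map_mk'_commutator (H : Subgroup G) [H.Normal] :
    (commutator G).map (mk' H) = commutator (G ⧸ H) := by
  rw [map_commutator_eq, range_mk', commutator_def]

theorem comap_mk'_commutator {H : Subgroup G} [H.Normal] (hH : H ≤ commutator G) :
    (commutator (G ⧸ H)).comap (mk' H) = commutator G := by
  rw [← map_mk'_commutator, comap_map_eq, ker_mk', sup_eq_left.mpr hH]

end QuotientGroup

theorem exists_finiteIndex_normal_inter_commutator_general {Γ : Type} [Group Γ] [Group.FG Γ]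
    (H : Subgroup Γ) (hle : H ≤ commutator Γ) (hnorm : H.Normal)
    (hfin : (H.subgroupOf (commutator Γ)).FiniteIndex) :
    ∃ Δ : Subgroup Γ, Δ.Normal ∧ Δ.FiniteIndex ∧ Δ ⊓ commutator Γ = H := by
  have : Finite (commutator (Γ ⧸ H)) :=
    QuotientGroup.map_mk'_commutator H ▸ QuotientGroup.finite_map_mk' H _
  obtain ⟨W, hW_normal, hW_index, hW⟩ :=
    exists_normal_finiteIndex_inf_commutator_eq_bot (G := Γ ⧸ H)
  refine ⟨W.comap (QuotientGroup.mk' H), hW_normal.comap _, ⟨?_⟩, ?_⟩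
  · rw [index_comap_of_surjective _ (QuotientGroup.mk'_surjective H)]
    exact hW_index.index_ne_zero
  · rw [← QuotientGroup.comap_mk'_commutator hle, ← comap_inf, hW, MonoidHom.comap_bot,
      QuotientGroup.ker_mk']

/-- in a finitely generated nilpotent group `Γ`, every (`Γ`-normal) finite-index
subgroup `H` of the commutator subgroup `[Γ,Γ]` is the intersection of `[Γ,Γ]` with a normal
finite-index subgroup `Δ` of `Γ`. -/
theorem exists_finiteIndex_normal_inter_commutator {Γ : Type} [Group Γ] [Group.FG Γ]
    [Group.IsNilpotent Γ] (H : Subgroup Γ) (hle : H ≤ commutator Γ) (hnorm : H.Normal)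
    (hfin : (H.subgroupOf (commutator Γ)).FiniteIndex) :
    ∃ Δ : Subgroup Γ, Δ.Normal ∧ Δ.FiniteIndex ∧ Δ ⊓ commutator Γ = H :=
  exists_finiteIndex_normal_inter_commutator_general H hle hnorm hfin
end

section
/- Let Γ be a finitely generated torsion-free nilpotent group arising as the group of ℤ-points of a unipotent algebraic ℚ-group that admits a filtration U = U₀ ⊇ U₁ ⊇ ⋯ ⊇ U_d = 1 by normal ℚ-subgroups with each quotient U_i/U_{i+1} ℚ-isomorphic to the additive group 𝔾_a. Then every finite-index subgroup of any arithmetic subgroup Γ of U(ℚ) is a congruence subgroup, i.e. contains the kernel of the reduction map U(ℤ) → U(ℤ/Nℤ) for some integer N ≥ 1. -/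
/-!
Because the filtration has abelian quotients, `G = U(ℤ)` is solvable, so by Kolchin's theorem its
unipotent action on `V = ℚ^m` is unitriangular for the flag `0 = W₀ ≤ W₁ ≤ ⋯ ≤ W_r = V`
in which `W_{i+1} / W_i` is the space of `G`-invariants of `V / W_i`. Let `D_k ≤ End V` consist of
the `X` with `X W_i ≤ W_{i-k}` for all `i`, and `G_k` of the `g` with `g - 1 ∈ D_k`. Then
`G_1 = G`, `G_r = 1`, and for `k ≥ 1` the map `g ↦ g - 1` is a homomorphism from `G_k` to the
`ℚ`-vector space `End V / D_{k+1}`, with kernel `G_{k+1}`.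

Descend from `G_r` to `G_1`, writing `Γ(N)` for the kernel of reduction mod `N`. Suppose a
finite-index `S ≤ G` contains `Γ(N₀) ∩ G_{k+1}`. Let `L` be the image of `G_k`, `Ω` the (finitely
generated) image of the integral matrices, `c > 0` with `c • (Ω ∩ ℚL) ⊆ L`, and `e` the index of
the normal core of `S ∩ Γ(N₀)`. For `g ∈ Γ(N₀ e c) ∩ G_k` the image of `g` lies in
`N₀ e c • (Ω ∩ ℚL) ⊆ e N₀ L`, so it is the image of an `e`-th power `u`, which lies in
`S ∩ Γ(N₀)`; then `g u⁻¹ ∈ Γ(N₀) ∩ G_{k+1} ≤ S`, so `g ∈ S`.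
-/

open Matrix

noncomputable section

/-- The inclusion `GL_m(ℤ) → GL_m(ℚ)`. -/
def glIntToRat (m : ℕ) :
    Matrix.GeneralLinearGroup (Fin m) ℤ →* Matrix.GeneralLinearGroup (Fin m) ℚ :=
  Units.map ((Int.castRingHom ℚ).mapMatrix.toMonoidHom)

/-- Reduction modulo `N` on `GL_m(ℤ)`. -/
def glRed (m N : ℕ) :
    Matrix.GeneralLinearGroup (Fin m) ℤ →* Matrix.GeneralLinearGroup (Fin m) (ZMod N) :=
  Units.map ((Int.castRingHom (ZMod N)).mapMatrix.toMonoidHom)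

theorem Subgroup.commutator_le_of_ker_le {G A : Type*} [Group G] [CommGroup A] {H K : Subgroup G}
    (φ : H →* A) (hφ : φ.ker ≤ K.subgroupOf H) : ⁅H, H⁆ ≤ K := by
  rw [← H.map_subtype_commutator]
  refine (Subgroup.map_mono ((Abelianization.commutator_subset_ker φ).trans hφ)).trans ?_
  simp [Subgroup.subgroupOf_map_subtype]

theorem Group.isSolvable_of_commutator_le {G : Type*} [Group G] {d : ℕ}
    (F : Fin (d + 1) → Subgroup G) (h0 : F 0 = ⊤) (hd : F (Fin.last d) = ⊥)
    (hF : ∀ i : Fin d, ⁅F i.castSucc, F i.castSucc⁆ ≤ F i.succ) : Group.IsSolvable G := by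
  have hle : ∀ i : Fin (d + 1), derivedSeries G i ≤ F i := by
    refine Fin.induction (by simp [h0]) fun i hi ↦ ?_
    simpa using (Subgroup.commutator_mono hi hi).trans (hF i)
  exact ⟨⟨d, le_bot_iff.1 (hd ▸ hle (Fin.last d))⟩⟩

namespace Module.End

variable {k V : Type*} [CommRing k] [AddCommGroup V] [Module k V]

theorem exists_pow_apply_notMem_of_pow_apply_mem (f : Module.End k V) {W : Submodule k V}
    {v : V} (hv : v ∉ W) {n : ℕ} (hn : (f ^ n) v ∈ W) :
    ∃ j, (f ^ j) v ∉ W ∧ f ((f ^ j) v) ∈ W := by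
  classical
  have hex : ∃ j, (f ^ j) v ∈ W := ⟨n, hn⟩
  have hpos : Nat.find hex ≠ 0 := fun h ↦ hv (by simpa [h] using Nat.find_spec hex)
  refine ⟨Nat.find hex - 1, Nat.find_min hex (by omega), ?_⟩
  rw [← Module.End.mul_apply, ← pow_succ', Nat.sub_add_cancel (Nat.one_le_iff_ne_zero.2 hpos)]
  exact Nat.find_spec hex

/-- The commutative case of Kolchin's theorem, relative to `W < V'`. -/
theorem exists_mem_notMem_forall_sub_mem [IsArtinian k V] (s : Set (Module.End k V))
    (hs : ∀ a ∈ s, IsNilpotent (a - 1)) {W : Submodule k V} (hW : ∀ a ∈ s, ∀ v ∈ W, a v ∈ W) :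
    ∀ {V' : Submodule k V}, W < V' → (∀ a ∈ s, ∀ v ∈ V', a v ∈ V') →
      (∀ a ∈ s, ∀ b ∈ s, ∀ v ∈ V', a (b v) - b (a v) ∈ W) →
      ∃ v ∈ V', v ∉ W ∧ ∀ a ∈ s, a v - v ∈ W := by
  intro V'
  induction V' using WellFoundedLT.induction with
  | ind V' ih =>
  intro hWV' hV' hcomm
  by_cases hfix : ∀ a ∈ s, ∀ v ∈ V', a v - v ∈ W
  · obtain ⟨v, hvV', hvW⟩ := SetLike.exists_of_lt hWV'
    exact ⟨v, hvV', hvW, fun a ha ↦ hfix a ha v hvV'⟩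
  push Not at hfix
  obtain ⟨a, ha, v, hvV', hav⟩ := hfix
  have hV'a : ∀ w ∈ V', (a - 1) w ∈ V' := fun w hw ↦ V'.sub_mem (hV' a ha w hw) hw
  -- Shrink `V'` to its vectors fixed by `a` modulo `W`: this is `s`-stable since `s` commutes
  -- modulo `W`, and still strictly above `W` since `a - 1` is nilpotent.
  set V'' := V' ⊓ W.comap (a - 1)
  have hWV'' : W < V'' := by
    obtain ⟨n, hn⟩ := hs a ha
    have hvW : v ∉ W := fun h ↦ hav (W.sub_mem (hW a ha v h) h)
    obtain ⟨j, hjW, hj⟩ := (a - 1).exists_pow_apply_notMem_of_pow_apply_mem hvW (n := n)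
      (by simp [hn])
    refine SetLike.lt_iff_le_and_exists.2 ⟨fun w hw ↦ Submodule.mem_inf.2 ⟨hWV'.le hw, ?_⟩, _,
      Submodule.mem_inf.2 ⟨?_, ?_⟩, hjW⟩
    · simpa using W.sub_mem (hW a ha w hw) hw
    · exact pow_apply_mem_of_forall_mem j hV'a v hvV'
    · exact hj
  have hV''V' : V'' < V' :=
    SetLike.lt_iff_le_and_exists.2 ⟨inf_le_left, v, hvV', fun h ↦ hav (by simpa using h.2)⟩
  have hV'' : ∀ b ∈ s, ∀ w ∈ V'', b w ∈ V'' := by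
    rintro b hb w ⟨hwV', hwW⟩
    refine ⟨hV' b hb w hwV', ?_⟩
    have : (a - 1) (b w) = (a (b w) - b (a w)) + b ((a - 1) w) := by simp
    simpa [this] using W.add_mem (hcomm a ha b hb w hwV') (hW b hb _ hwW)
  obtain ⟨w, hwV'', hwW, hw⟩ := ih V'' hV''V' hWV'' hV''
    (fun b hb c hc u hu ↦ hcomm b hb c hc u hu.1)
  exact ⟨w, hwV''.1, hwW, hw⟩

end Module.End

namespace Representation

variable {k G V : Type*} [CommRing k] [Group G] [AddCommGroup V] [Module k V]
  (ρ : Representation k G V)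

def fixedMod (H : Subgroup G) (W : Submodule k V) : Submodule k V :=
  ⨅ g ∈ H, W.comap (ρ g - 1)

def HasFixedVectorMod (H : Subgroup G) : Prop :=
  ∀ W : Submodule k V, W ≠ ⊤ → (∀ g ∈ H, ∀ v ∈ W, ρ g v ∈ W) → ¬ ρ.fixedMod H W ≤ W

variable {ρ}

theorem mem_fixedMod {H : Subgroup G} {W : Submodule k V} {v : V} :
    v ∈ ρ.fixedMod H W ↔ ∀ g ∈ H, ρ g v - v ∈ W := by
  simp [fixedMod]

theorem le_fixedMod {H : Subgroup G} {W : Submodule k V} (hW : ∀ g ∈ H, ∀ v ∈ W, ρ g v ∈ W) :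
    W ≤ ρ.fixedMod H W :=
  fun v hv ↦ mem_fixedMod.2 fun g hg ↦ W.sub_mem (hW g hg v hv) hv

open scoped commutatorElement

section Commutator

variable {H : Subgroup G} {W : Submodule k V}

theorem apply_mem_fixedMod_commutator (hW : ∀ g ∈ H, ∀ v ∈ W, ρ g v ∈ W) {g : G}
    (hg : g ∈ H) {v : V} (hv : v ∈ ρ.fixedMod ⁅H, H⁆ W) : ρ g v ∈ ρ.fixedMod ⁅H, H⁆ W := by
  refine mem_fixedMod.2 fun c hc ↦ ?_
  have hconj : g⁻¹ * c * g ∈ ⁅H, H⁆ := by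
    have : g⁻¹ * c * g = c * ⁅c⁻¹, g⁻¹⁆ := by group
    exact this ▸ mul_mem hc (Subgroup.commutator_mem_commutator
      (inv_mem (H.commutator_le_self hc)) (inv_mem hg))
  have : ρ c (ρ g v) - ρ g v = ρ g (ρ (g⁻¹ * c * g) v - v) := by simp
  exact this ▸ hW g hg _ (mem_fixedMod.1 hv _ hconj)

theorem apply_apply_sub_mem_of_mem_fixedMod_commutator (hW : ∀ g ∈ H, ∀ v ∈ W, ρ g v ∈ W)
    {g h : G} (hg : g ∈ H) (hh : h ∈ H) {v : V} (hv : v ∈ ρ.fixedMod ⁅H, H⁆ W) :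
    ρ g (ρ h v) - ρ h (ρ g v) ∈ W := by
  have hgh : (h * g)⁻¹ * (g * h) ∈ ⁅H, H⁆ := by
    have : (h * g)⁻¹ * (g * h) = ⁅g⁻¹, h⁻¹⁆ := by group
    exact this ▸ Subgroup.commutator_mem_commutator (inv_mem hg) (inv_mem hh)
  have : ρ g (ρ h v) - ρ h (ρ g v) = ρ (h * g) (ρ ((h * g)⁻¹ * (g * h)) v - v) := by
    simp only [map_sub, ← Module.End.mul_apply, ← map_mul]
    group
  exact this ▸ hW _ (mul_mem hh hg) _ (mem_fixedMod.1 hv _ hgh)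

end Commutator

variable (ρ)

theorem hasFixedVectorMod_bot : ρ.HasFixedVectorMod ⊥ := by
  intro W hW _ hle
  obtain ⟨v, -, hv⟩ := SetLike.exists_of_lt (lt_top_iff_ne_top.2 hW)
  exact hv (hle (mem_fixedMod.2 fun g hg ↦ by simp [Subgroup.mem_bot.1 hg]))

theorem HasFixedVectorMod.of_commutator [IsArtinian k V] (hρ : ∀ g, IsNilpotent (ρ g - 1))
    {H : Subgroup G} (h : ρ.HasFixedVectorMod ⁅H, H⁆) : ρ.HasFixedVectorMod H := by
  intro W hW hWH hle
  have hWW' : W < ρ.fixedMod ⁅H, H⁆ W :=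
    lt_of_le_not_ge (le_fixedMod fun g hg ↦ hWH g (H.commutator_le_self hg))
      (h W hW fun g hg ↦ hWH g (H.commutator_le_self hg))
  obtain ⟨w, -, hwW, hw⟩ := Module.End.exists_mem_notMem_forall_sub_mem (ρ '' H)
    (by rintro _ ⟨g, -, rfl⟩; exact hρ g) (by rintro _ ⟨g, hg, rfl⟩; exact hWH g hg) hWW'
    (by rintro _ ⟨g, hg, rfl⟩; exact fun v ↦ apply_mem_fixedMod_commutator hWH hg)
    (by rintro _ ⟨g, hg, rfl⟩ _ ⟨h, hh, rfl⟩ v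
        exact apply_apply_sub_mem_of_mem_fixedMod_commutator hWH hg hh)
  exact hwW (hle (mem_fixedMod.2 fun g hg ↦ hw _ ⟨g, hg, rfl⟩))

theorem hasFixedVectorMod_top [Group.IsSolvable G] [IsArtinian k V]
    (hρ : ∀ g, IsNilpotent (ρ g - 1)) : ρ.HasFixedVectorMod ⊤ := by
  obtain ⟨n, hn⟩ := Group.IsSolvable.solvable (G := G)
  exact Nat.decreasingInduction (motive := fun i _ ↦ ρ.HasFixedVectorMod (derivedSeries G i))
    (fun i _ ↦ .of_commutator ρ hρ) (hn ▸ ρ.hasFixedVectorMod_bot) n.zero_le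

def fixedFlag : ℕ → Submodule k V
  | 0 => ⊥
  | i + 1 => ρ.fixedMod ⊤ (fixedFlag i)

variable {ρ}

theorem mem_fixedFlag_succ {i : ℕ} {v : V} :
    v ∈ ρ.fixedFlag (i + 1) ↔ ∀ g, ρ g v - v ∈ ρ.fixedFlag i := by
  simp [fixedFlag, mem_fixedMod]

theorem sub_mem_fixedFlag_pred {i : ℕ} {v : V} (hv : v ∈ ρ.fixedFlag i) (g : G) :
    ρ g v - v ∈ ρ.fixedFlag (i - 1) := by
  cases i with
  | zero => simp_all [fixedFlag]
  | succ i => exact mem_fixedFlag_succ.1 hv g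

theorem fixedFlag_monotone : Monotone ρ.fixedFlag := by
  refine monotone_nat_of_le_succ fun i v hv ↦ ?_
  induction i generalizing v with
  | zero => simp_all [fixedFlag]
  | succ i ih => exact mem_fixedFlag_succ.2 fun g ↦ ih _ (mem_fixedFlag_succ.1 hv g)

theorem apply_mem_fixedFlag {i : ℕ} {v : V} (hv : v ∈ ρ.fixedFlag i) (g : G) :
    ρ g v ∈ ρ.fixedFlag i := by
  induction i generalizing g v with
  | zero => simp_all [fixedFlag]
  | succ i ih =>
    refine mem_fixedFlag_succ.2 fun h ↦ ?_
    have : ρ h (ρ g v) - ρ g v = ρ g (ρ (g⁻¹ * h * g) v - v) := by simp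
    exact this ▸ ih (mem_fixedFlag_succ.1 hv _) g

/-- Kolchin's theorem for solvable groups. -/
theorem exists_fixedFlag_eq_top [Group.IsSolvable G] [IsArtinian k V] [IsNoetherian k V]
    (hρ : ∀ g, IsNilpotent (ρ g - 1)) : ∃ r, ρ.fixedFlag r = ⊤ := by
  obtain ⟨r, hr⟩ := monotone_stabilizes_iff_noetherian.2 ‹_› ⟨_, fixedFlag_monotone (ρ := ρ)⟩
  refine ⟨r, by_contra fun hne ↦ ρ.hasFixedVectorMod_top hρ _ hne
    (fun g _ _ ↦ (apply_mem_fixedFlag · g)) ?_⟩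
  exact (hr (r + 1) r.le_succ).ge

end Representation

section FlagDepth

variable {k V : Type*} [CommRing k] [AddCommGroup V] [Module k V]

def flagDepth (W : ℕ → Submodule k V) (c : ℕ) : Submodule k (Module.End k V) where
  carrier := {X | ∀ i, ∀ v ∈ W i, X v ∈ W (i - c)}
  add_mem' hX hY i v hv := add_mem (hX i v hv) (hY i v hv)
  zero_mem' _ _ _ := zero_mem _
  smul_mem' a _ hX i v hv := Submodule.smul_mem _ a (hX i v hv)

variable {W : ℕ → Submodule k V} {X Y : Module.End k V} {a b : ℕ}

theorem flagDepth_antitone (hW : Monotone W) : Antitone (flagDepth W) :=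
  fun _ _ hab _ hX i v hv ↦ hW (by omega) (hX i v hv)

theorem mul_mem_flagDepth (hX : X ∈ flagDepth W a) (hY : Y ∈ flagDepth W b) :
    X * Y ∈ flagDepth W (a + b) := by
  intro i v hv
  simpa [Nat.sub_sub, add_comm] using hX _ _ (hY i v hv)

end FlagDepth

namespace Representation

variable {k G V : Type*} [CommRing k] [Group G] [AddCommGroup V] [Module k V]
  (ρ : Representation k G V)

theorem mem_flagDepth_fixedFlag_zero (g : G) : ρ g ∈ flagDepth ρ.fixedFlag 0 :=
  fun _ _ hv ↦ apply_mem_fixedFlag hv g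

def depthSubgroup (n : ℕ) : Subgroup G where
  carrier := {g | ρ g - 1 ∈ flagDepth ρ.fixedFlag n}
  one_mem' := by simp
  mul_mem' {g h} hg hh := by
    have : ρ (g * h) - 1 = (ρ g - 1) * ρ h + (ρ h - 1) := by simp [sub_mul]
    change ρ (g * h) - 1 ∈ flagDepth ρ.fixedFlag n
    exact this ▸ add_mem (mul_mem_flagDepth hg (ρ.mem_flagDepth_fixedFlag_zero h)) hh
  inv_mem' {g} hg := by
    have : ρ g⁻¹ - 1 = -(ρ g⁻¹ * (ρ g - 1)) := by simp [mul_sub, ← map_mul]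
    change ρ g⁻¹ - 1 ∈ flagDepth ρ.fixedFlag n
    rw [this, ← zero_add n]
    exact neg_mem (mul_mem_flagDepth (ρ.mem_flagDepth_fixedFlag_zero g⁻¹) hg)

variable {ρ}

theorem depthSubgroup_one : ρ.depthSubgroup 1 = ⊤ :=
  eq_top_iff.2 fun g _ _ _ hv ↦ by simpa using sub_mem_fixedFlag_pred hv g

theorem depthSubgroup_eq_bot (hρ : Function.Injective ρ) {r : ℕ} (hr : ρ.fixedFlag r = ⊤) :
    ρ.depthSubgroup r = ⊥ := by
  refine eq_bot_iff.2 fun g hg ↦ Subgroup.mem_bot.2 (hρ ?_)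
  ext v
  have : ρ g v - v = 0 := by simpa [fixedFlag] using hg r v (hr ▸ Submodule.mem_top)
  simpa [sub_eq_zero] using this

theorem depthSubgroup_antitone : Antitone ρ.depthSubgroup :=
  fun _ _ hab _ hg ↦ flagDepth_antitone fixedFlag_monotone hab hg

variable (ρ) in
def depthHom (n : ℕ) :
    Additive (ρ.depthSubgroup (n + 1)) →+ Module.End k V ⧸ flagDepth ρ.fixedFlag (n + 2) where
  toFun g := Submodule.Quotient.mk (ρ g.toMul - 1)
  map_zero' := by simp
  map_add' g h := by
    rw [← Submodule.Quotient.mk_add, Submodule.Quotient.eq]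
    have : ρ (g + h).toMul - 1 - (ρ g.toMul - 1 + (ρ h.toMul - 1)) =
        (ρ g.toMul - 1) * (ρ h.toMul - 1) := by
      simp [mul_sub, sub_mul]
      abel
    rw [this]
    exact flagDepth_antitone fixedFlag_monotone (by omega) (mul_mem_flagDepth g.toMul.2 h.toMul.2)

theorem mem_depthSubgroup_of_depthHom_eq_zero {n : ℕ} {g : ρ.depthSubgroup (n + 1)}
    (hg : ρ.depthHom n (.ofMul g) = 0) : (g : G) ∈ ρ.depthSubgroup (n + 2) :=
  (Submodule.Quotient.mk_eq_zero _).1 hg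

end Representation

section Denominators

variable {A : Type*} [AddCommGroup A] [Module ℚ A]

theorem AddSubgroup.exists_nsmul_mem_of_mem_span_rat (L : AddSubgroup A) {x : A}
    (hx : x ∈ Submodule.span ℚ (L : Set A)) : ∃ c : ℕ, 0 < c ∧ c • x ∈ L := by
  induction hx using Submodule.span_induction with
  | mem x hx => exact ⟨1, one_pos, by simpa using hx⟩
  | zero => exact ⟨1, one_pos, by simp⟩
  | add x y _ _ hx hy =>
    obtain ⟨a, ha, hax⟩ := hx
    obtain ⟨b, hb, hby⟩ := hy
    refine ⟨a * b, by positivity, ?_⟩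
    rw [smul_add, mul_comm a b, mul_smul, mul_comm b a, mul_smul]
    exact L.add_mem (L.nsmul_mem hax b) (L.nsmul_mem hby a)
  | smul q x _ hx =>
    obtain ⟨a, ha, hax⟩ := hx
    refine ⟨q.den * a, by positivity, ?_⟩
    have : (q.den * a) • q • x = q.num • a • x := by
      rw [← Nat.cast_smul_eq_nsmul ℚ, ← Nat.cast_smul_eq_nsmul ℚ a, ← Int.cast_smul_eq_zsmul ℚ,
        smul_smul, smul_smul, Nat.cast_mul, mul_right_comm, Rat.den_mul_eq_num]
    exact this ▸ L.zsmul_mem hax _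

theorem AddSubgroup.exists_nsmul_mem_of_fg (L : AddSubgroup A) {M : Submodule ℤ A} (hM : M.FG)
    (hML : ∀ x ∈ M, x ∈ Submodule.span ℚ (L : Set A)) : ∃ c : ℕ, 0 < c ∧ ∀ x ∈ M, c • x ∈ L := by
  classical
  obtain ⟨T, rfl⟩ := hM
  choose! c hc hcL using fun x (hx : x ∈ T) ↦
    L.exists_nsmul_mem_of_mem_span_rat (hML x (Submodule.subset_span hx))
  refine ⟨∏ x ∈ T, c x, Finset.prod_pos hc, fun x hx ↦ ?_⟩
  induction hx using Submodule.span_induction with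
  | mem x hx =>
    obtain ⟨d, hd⟩ := Finset.dvd_prod_of_mem c hx
    rw [hd, mul_comm, mul_smul]
    exact L.nsmul_mem (hcL x hx) d
  | zero => simp
  | add x y _ _ hx hy => simpa [smul_add] using L.add_mem hx hy
  | smul z x _ hx =>
    rw [smul_comm]
    exact L.zsmul_mem hx z

end Denominators

theorem exists_inf_le_of_inf_le_of_additive {G A : Type*} [Group G] [AddCommGroup A]
    [Module ℚ A] {Γ : ℕ → Subgroup G} (hΓ : ∀ N, 0 < N → (Γ N).FiniteIndex)
    (hΓ_dvd : ∀ {M N : ℕ}, M ∣ N → Γ N ≤ Γ M) {K K' : Subgroup G} (ψ : Additive K →+ A)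
    (hψ : ∀ g : K, ψ (.ofMul g) = 0 → (g : G) ∈ K') {Ω : Submodule ℤ A} (hΩ : Ω.FG)
    (hψΓ : ∀ N (g : K), (g : G) ∈ Γ N → ∃ ω ∈ Ω, ψ (.ofMul g) = N • ω)
    {S : Subgroup G} [S.FiniteIndex] {N₀ : ℕ} (hN₀ : 0 < N₀) (hS : Γ N₀ ⊓ K' ≤ S) :
    ∃ N, 0 < N ∧ Γ N ⊓ K ≤ S := by
  have := hΓ N₀ hN₀
  set S₀ := (S ⊓ Γ N₀).normalCore
  have he : 0 < S₀.index := Nat.pos_of_ne_zero Subgroup.FiniteIndex.index_ne_zero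
  obtain ⟨c, hc, hcL⟩ := ψ.range.exists_nsmul_mem_of_fg (hΩ.of_le inf_le_left)
    (M := Ω ⊓ (Submodule.span ℚ (ψ.range : Set A)).restrictScalars ℤ) fun x hx ↦ hx.2
  refine ⟨N₀ * S₀.index * c, by positivity, ?_⟩
  rintro g ⟨hgΓ, hgK⟩
  obtain ⟨ω, hωΩ, hω⟩ := hψΓ _ ⟨g, hgK⟩ hgΓ
  have hωL : ω ∈ Submodule.span ℚ (ψ.range : Set A) := by
    have : ω = ((N₀ * S₀.index * c : ℕ) : ℚ)⁻¹ • ψ (.ofMul ⟨g, hgK⟩) := by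
      rw [hω, ← Nat.cast_smul_eq_nsmul ℚ, smul_smul, inv_mul_cancel₀ (by positivity), one_smul]
    exact this ▸ Submodule.smul_mem _ _ (Submodule.subset_span ⟨_, rfl⟩)
  obtain ⟨t, ht⟩ := hcL ω ⟨hωΩ, hωL⟩
  -- `ψ g = S₀.index • N₀ • ψ t`, so `g` agrees modulo `ker ψ` with `u ∈ S₀`
  set u : K := (t.toMul ^ N₀) ^ S₀.index
  have hu : (u : G) ∈ S₀ := by simpa [u] using S₀.pow_index_mem ((t.toMul ^ N₀ : K) : G)
  obtain ⟨huS, huΓ⟩ := Subgroup.mem_inf.1 ((S ⊓ Γ N₀).normalCore_le hu)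
  have hgu : ψ (.ofMul (⟨g, hgK⟩ * u⁻¹)) = 0 := by
    rw [ofMul_mul, ofMul_inv, map_add, map_neg, ofMul_pow, ofMul_pow, map_nsmul, map_nsmul,
      ofMul_toMul, ht, hω, ← mul_smul, ← mul_smul, mul_comm N₀]
    exact add_neg_cancel _
  have hgΓ₀ : g ∈ Γ N₀ := hΓ_dvd (Dvd.intro _ (mul_assoc _ _ _).symm) hgΓ
  have hgu' : g * (u : G)⁻¹ ∈ S := hS (Subgroup.mem_inf.2 ⟨mul_mem hgΓ₀ (inv_mem huΓ), hψ _ hgu⟩)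
  simpa using mul_mem hgu' huS

section IntegerMatrices

variable (n : Type*) [Fintype n] [DecidableEq n]

def intMatrixToEnd : Matrix n n ℤ →+* Module.End ℚ (n → ℚ) :=
  (Matrix.toLinAlgEquiv' : Matrix n n ℚ ≃ₐ[ℚ] _).toRingHom.comp (Int.castRingHom ℚ).mapMatrix

theorem intMatrixToEnd_injective : Function.Injective (intMatrixToEnd n) :=
  Matrix.toLinAlgEquiv'.injective.comp (Matrix.map_injective Int.cast_injective)

def congrKernel (N : ℕ) : Subgroup (GL n ℤ) :=
  (Units.map ((Int.castRingHom (ZMod N)).mapMatrix.toMonoidHom)).ker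

variable {n}

theorem mem_congrKernel {N : ℕ} {g : GL n ℤ} :
    g ∈ congrKernel n N ↔ ∃ Z : Matrix n n ℤ, (g : Matrix n n ℤ) - 1 = N • Z := by
  have hdvd : g ∈ congrKernel n N ↔ ∀ i j, (N : ℤ) ∣ ((g : Matrix n n ℤ) - 1) i j := by
    simp [congrKernel, Units.ext_iff, ← Matrix.ext_iff, Matrix.one_apply,
      ← ZMod.intCast_zmod_eq_zero_iff_dvd, sub_eq_zero, apply_ite]
  rw [hdvd]
  refine ⟨fun h ↦ ?_, fun ⟨Z, hZ⟩ i j ↦ ⟨Z i j, by rw [hZ]; simp⟩⟩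
  choose Z hZ using h
  exact ⟨.of Z, Matrix.ext fun i j ↦ by simp [hZ]⟩

theorem congrKernel_le_of_dvd {M N : ℕ} (h : M ∣ N) : congrKernel n N ≤ congrKernel n M := by
  obtain ⟨a, rfl⟩ := h
  intro g hg
  obtain ⟨Z, hZ⟩ := mem_congrKernel.1 hg
  exact mem_congrKernel.2 ⟨a • Z, by rw [hZ, mul_smul]⟩

instance congrKernel_finiteIndex (N : ℕ) [NeZero N] : (congrKernel n N).FiniteIndex := by
  unfold congrKernel
  infer_instance

def Subgroup.ratRep (G : Subgroup (GL n ℤ)) : Representation ℚ G (n → ℚ) :=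
  (intMatrixToEnd n).toMonoidHom.comp ((Units.coeHom _).comp G.subtype)

theorem Subgroup.ratRep_sub_one {G : Subgroup (GL n ℤ)} (g : G) :
    G.ratRep g - 1 = intMatrixToEnd n (((g : GL n ℤ) : Matrix n n ℤ) - 1) := by
  simp [Subgroup.ratRep]

theorem Subgroup.ratRep_injective (G : Subgroup (GL n ℤ)) : Function.Injective G.ratRep :=
  fun _ _ h ↦ Subtype.ext (Units.ext (intMatrixToEnd_injective n h))

end IntegerMatrices

section CongruenceSubgroupProperty

variable {n : Type*} [Fintype n] [DecidableEq n] {G : Subgroup (GL n ℤ)}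

theorem exists_congrKernel_inf_depthSubgroup_le (S : Subgroup G) [S.FiniteIndex] (k : ℕ)
    (h : ∃ N, 0 < N ∧ (congrKernel n N).subgroupOf G ⊓ G.ratRep.depthSubgroup (k + 2) ≤ S) :
    ∃ N, 0 < N ∧ (congrKernel n N).subgroupOf G ⊓ G.ratRep.depthSubgroup (k + 1) ≤ S := by
  obtain ⟨N₀, hN₀, hS⟩ := h
  let π := ((flagDepth G.ratRep.fixedFlag (k + 2)).mkQ.restrictScalars ℤ).comp
    (intMatrixToEnd n).toAddMonoidHom.toIntLinearMap
  refine exists_inf_le_of_inf_le_of_additive (fun N hN ↦ ?_)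
    (fun hMN _ hg ↦ Subgroup.mem_subgroupOf.2 (congrKernel_le_of_dvd hMN hg))
    (G.ratRep.depthHom k)
    (fun _ ↦ Representation.mem_depthSubgroup_of_depthHom_eq_zero) (Submodule.fg_range π)
    (fun N g hg ↦ ?_) hN₀ hS
  · have : NeZero N := ⟨hN.ne'⟩
    infer_instance
  · obtain ⟨Z, hZ⟩ : ∃ Z, ((g : GL n ℤ) : Matrix n n ℤ) - 1 = N • Z := mem_congrKernel.1 hg
    refine ⟨π Z, LinearMap.mem_range_self π Z, ?_⟩
    change Submodule.Quotient.mk (G.ratRep g - 1) = _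
    rw [Subgroup.ratRep_sub_one, hZ, map_nsmul]
    rfl

theorem exists_congrKernel_subgroupOf_le [Group.IsSolvable G]
    (hG : ∀ g ∈ G, IsNilpotent ((g : Matrix n n ℤ) - 1)) (S : Subgroup G) [S.FiniteIndex] :
    ∃ N, 0 < N ∧ (congrKernel n N).subgroupOf G ≤ S := by
  have hρ : ∀ g, IsNilpotent (G.ratRep g - 1) := fun g ↦
    (Subgroup.ratRep_sub_one g).symm ▸ (hG g g.2).map (intMatrixToEnd n)
  obtain ⟨r, hr⟩ := Representation.exists_fixedFlag_eq_top hρ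
  have hbot : G.ratRep.depthSubgroup (r + 1) = ⊥ := eq_bot_iff.2 <|
    (Representation.depthSubgroup_antitone r.le_succ).trans
      (Representation.depthSubgroup_eq_bot G.ratRep_injective hr).le
  have key : ∃ N, 0 < N ∧ (congrKernel n N).subgroupOf G ⊓ G.ratRep.depthSubgroup (0 + 1) ≤ S :=
    Nat.decreasingInduction (motive := fun j _ ↦ ∃ N, 0 < N ∧
        (congrKernel n N).subgroupOf G ⊓ G.ratRep.depthSubgroup (j + 1) ≤ S)
      (fun j _ ↦ exists_congrKernel_inf_depthSubgroup_le S j)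
      ⟨1, one_pos, by simp [hbot]⟩ r.zero_le
  simpa [Representation.depthSubgroup_one] using key

end CongruenceSubgroupProperty

theorem congruence_subgroup_property_unipotent_general (m : ℕ)
    (G : Subgroup (Matrix.GeneralLinearGroup (Fin m) ℤ))
    -- every element of `G` is a unipotent matrix:
    (huni : ∀ g ∈ G, ((g : Matrix (Fin m) (Fin m) ℤ) - 1) ^ m = 0)
    -- the filtration coming from `U = U₀ ⊇ U₁ ⊇ ⋯ ⊇ U_d = 1` with quotients `𝔾_a`:
    (d : ℕ) (F : Fin (d + 1) → Subgroup G)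
    (hF0 : F 0 = ⊤) (hFd : F (Fin.last d) = ⊥)
    (hGa : ∀ i : Fin d, ∃ φ : (F i.castSucc) →* Multiplicative ℤ,
      Function.Surjective φ ∧ φ.ker = (F i.succ).subgroupOf (F i.castSucc))
    -- `Γ` is an arithmetic subgroup of `U(ℚ)`:
    (Γ : Subgroup (Matrix.GeneralLinearGroup (Fin m) ℚ))
    (harith : Subgroup.Commensurable Γ (G.map (glIntToRat m))) :
    ∀ H : Subgroup (Matrix.GeneralLinearGroup (Fin m) ℚ), H ≤ Γ →
      (H.subgroupOf Γ).FiniteIndex →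
      ∃ N : ℕ, 0 < N ∧
        ∀ g ∈ G, glRed m N g = 1 → glIntToRat m g ∈ H := by
  intro H _ hH
  have : Group.IsSolvable G := Group.isSolvable_of_commutator_le F hF0 hFd fun i ↦
    have ⟨φ, _, hφ⟩ := hGa i
    Subgroup.commutator_le_of_ker_le φ hφ.le
  have : (H.comap ((glIntToRat m).comp G.subtype)).FiniteIndex := by
    refine ⟨?_⟩
    rw [Subgroup.index_comap, MonoidHom.range_comp, Subgroup.range_subtype]
    exact Subgroup.relIndex_ne_zero_trans hH.index_ne_zero harith.1
  obtain ⟨N, hN, hS⟩ := exists_congrKernel_subgroupOf_le (fun g hg ↦ ⟨m, huni g hg⟩)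
    (H.comap ((glIntToRat m).comp G.subtype))
  exact ⟨N, hN, fun g hg hred ↦ hS (show ⟨g, hg⟩ ∈ (congrKernel _ N).subgroupOf G from hred)⟩

/-- let `G = U(ℤ)` be the group of integer points of a unipotent algebraic
`ℚ`-group `U`, admitting a filtration by normal subgroups with successive quotients `𝔾_a`
(on integral points: infinite cyclic quotients). Then every finite-index subgroup of any
arithmetic subgroup `Γ` of `U(ℚ)` (i.e. of a subgroup of `GL_m(ℚ)` commensurable with `G`)
is a congruence subgroup: it contains the kernel of the reduction `U(ℤ) → U(ℤ/N)` for
some `N ≥ 1`. -/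
theorem congruence_subgroup_property_unipotent (m : ℕ)
    (G : Subgroup (Matrix.GeneralLinearGroup (Fin m) ℤ))
    -- every element of `G` is a unipotent matrix:
    (huni : ∀ g ∈ G, ((g : Matrix (Fin m) (Fin m) ℤ) - 1) ^ m = 0)
    -- the filtration coming from `U = U₀ ⊇ U₁ ⊇ ⋯ ⊇ U_d = 1` with quotients `𝔾_a`:
    (d : ℕ) (F : Fin (d + 1) → Subgroup G)
    (hF0 : F 0 = ⊤) (hFd : F (Fin.last d) = ⊥)
    (hmono : ∀ i : Fin d, F i.succ ≤ F i.castSucc)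
    (hnorm : ∀ i : Fin (d + 1), (F i).Normal)
    (hGa : ∀ i : Fin d, ∃ φ : (F i.castSucc) →* Multiplicative ℤ,
      Function.Surjective φ ∧ φ.ker = (F i.succ).subgroupOf (F i.castSucc))
    -- `Γ` is an arithmetic subgroup of `U(ℚ)`:
    (Γ : Subgroup (Matrix.GeneralLinearGroup (Fin m) ℚ))
    (harith : Subgroup.Commensurable Γ (G.map (glIntToRat m))) :
    ∀ H : Subgroup (Matrix.GeneralLinearGroup (Fin m) ℚ), H ≤ Γ →
      (H.subgroupOf Γ).FiniteIndex →
      ∃ N : ℕ, 0 < N ∧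
        ∀ g ∈ G, glRed m N g = 1 → glIntToRat m g ∈ H :=
  congruence_subgroup_property_unipotent_general m G huni d F hF0 hFd hGa Γ harith
end
end
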